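/- arXiv:math/0307169 — 4 statements merged into one kernel-verified Lean document; each statement's English description precedes it below -/
import Mathlib

section
/- Let 0 < r < ∞, r ≠ 1, and let a, b be positive semidefinite n×n complex matrices. Then Tr((a+b)^r) = Tr(a^r) + Tr(b^r) if and only if a·b = 0 (equivalently, a and b have orthogonal supports). -/
open Matrix
open scoped ComplexOrder

set_option linter.unusedSectionVars false
set_option maxHeartbeats 1000000

section Helpers
open Polynomial

variable {ι κ : Type*} [Fintype ι] [DecidableEq ι] [Fintype κ] [DecidableEq κ]

private lemma charpoly_eval' (A : Matrix ι ι ℂ) (x : ℂ) :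
    A.charpoly.eval x = (x • (1 : Matrix ι ι ℂ) - A).det := by
  rw [Matrix.charpoly, ← Polynomial.coe_evalRingHom, RingHom.map_det]
  congr 1
  ext i j
  by_cases h : i = j
  · subst h
    simp [Matrix.charmatrix_apply_eq, Matrix.one_apply]
  · simp [Matrix.charmatrix_apply_ne _ _ _ h, Matrix.one_apply, h]

private lemma det_conj_unitary {A V : Matrix ι ι ℂ} (hV : Vᴴ * V = 1) :
    (Vᴴ * A * V).det = A.det := by
  have h1 : Vᴴ.det * V.det = 1 := by rw [← Matrix.det_mul, hV, Matrix.det_one]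
  rw [Matrix.det_mul, Matrix.det_mul]
  ring_nf
  rw [mul_comm Vᴴ.det, mul_assoc, h1, mul_one]

private lemma smul_one_sub_conj {A V : Matrix ι ι ℂ} (hV : Vᴴ * V = 1) (x : ℂ) :
    x • (1 : Matrix ι ι ℂ) - Vᴴ * A * V = Vᴴ * (x • (1 : Matrix ι ι ℂ) - A) * V := by
  rw [Matrix.mul_sub, Matrix.sub_mul]
  congr 1
  rw [Matrix.mul_smul, Matrix.smul_mul, mul_one, hV]

private lemma charpoly_conj_unitary (A : Matrix ι ι ℂ) {V : Matrix ι ι ℂ} (hV : Vᴴ * V = 1) :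
    (Vᴴ * A * V).charpoly = A.charpoly := by
  apply Polynomial.eq_of_infinite_eval_eq
  apply Set.infinite_univ.mono (s := (Set.univ : Set ℂ))
  intro x _
  simp only [Set.mem_setOf_eq, charpoly_eval']
  rw [smul_one_sub_conj hV, det_conj_unitary hV]

private lemma charpoly_hermitian {A : Matrix ι ι ℂ} (hA : A.IsHermitian) :
    A.charpoly = ∏ i, (X - C ((hA.eigenvalues i : ℝ) : ℂ)) := by
  apply Polynomial.eq_of_infinite_eval_eq
  apply Set.infinite_univ.mono (s := (Set.univ : Set ℂ))
  intro x _
  simp only [Set.mem_setOf_eq, charpoly_eval', eval_prod, eval_sub, eval_X, eval_C]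
  have hUU : (hA.eigenvectorUnitary : Matrix ι ι ℂ)ᴴ * (hA.eigenvectorUnitary : Matrix ι ι ℂ)
      = 1 := by
    rw [← Matrix.star_eq_conjTranspose]
    exact Unitary.star_mul_self_of_mem hA.eigenvectorUnitary.2
  have hsp : (hA.eigenvectorUnitary : Matrix ι ι ℂ)ᴴ * A * (hA.eigenvectorUnitary : Matrix ι ι ℂ)
      = Matrix.diagonal (RCLike.ofReal ∘ hA.eigenvalues) := by
    rw [← Matrix.star_eq_conjTranspose]
    have := hA.conjStarAlgAut_star_eigenvectorUnitary
    rwa [Unitary.conjStarAlgAut_apply, Unitary.coe_star, star_star] at this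
  calc (x • (1 : Matrix ι ι ℂ) - A).det
      = ((hA.eigenvectorUnitary : Matrix ι ι ℂ)ᴴ * (x • (1 : Matrix ι ι ℂ) - A)
          * (hA.eigenvectorUnitary : Matrix ι ι ℂ)).det := by rw [det_conj_unitary hUU]
    _ = (x • (1 : Matrix ι ι ℂ) - Matrix.diagonal (RCLike.ofReal ∘ hA.eigenvalues)).det := by
        rw [← smul_one_sub_conj hUU, hsp]
    _ = ∏ i, (x - ((hA.eigenvalues i : ℝ) : ℂ)) := by
        rw [Matrix.smul_one_eq_diagonal, Matrix.diagonal_sub, Matrix.det_diagonal]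
        rfl

private lemma roots_charpoly_hermitian {A : Matrix ι ι ℂ} (hA : A.IsHermitian) :
    A.charpoly.roots = Finset.univ.val.map (fun i => ((hA.eigenvalues i : ℝ) : ℂ)) := by
  rw [charpoly_hermitian hA, ← Polynomial.roots_multiset_prod_X_sub_C
    (Finset.univ.val.map (fun i => ((hA.eigenvalues i : ℝ) : ℂ)))]
  congr 1
  rw [Multiset.map_map, Finset.prod_eq_multiset_prod]
  rfl

private lemma sum_f_eigenvalues_eq_roots {A : Matrix ι ι ℂ} (hA : A.IsHermitian) (f : ℝ → ℝ) :
    (A.charpoly.roots.map (fun z => f z.re)).sum = ∑ i, f (hA.eigenvalues i) := by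
  rw [roots_charpoly_hermitian hA, Multiset.map_map, Finset.sum_eq_multiset_sum]
  congr 1

private lemma charpoly_mul_conjTranspose_comm (Z : Matrix ι κ ℂ) :
    (Z * Zᴴ).charpoly * X ^ (Fintype.card κ) = (Zᴴ * Z).charpoly * X ^ (Fintype.card ι) := by
  apply Polynomial.eq_of_infinite_eval_eq
  apply ((Set.finite_singleton (0:ℂ)).infinite_compl).mono
  intro x hx
  simp only [Set.mem_compl_iff, Set.mem_singleton_iff] at hx
  simp only [Set.mem_setOf_eq, eval_mul, eval_pow, eval_X, charpoly_eval']
  have e1 : x • (1 : Matrix ι ι ℂ) - Z * Zᴴ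
      = x • ((1 : Matrix ι ι ℂ) - (x⁻¹ • Z) * Zᴴ) := by
    rw [smul_sub, Matrix.smul_mul, smul_smul, mul_inv_cancel₀ hx, one_smul]
  have e2 : x • (1 : Matrix κ κ ℂ) - Zᴴ * Z
      = x • ((1 : Matrix κ κ ℂ) - Zᴴ * (x⁻¹ • Z)) := by
    rw [smul_sub, Matrix.mul_smul, smul_smul, mul_inv_cancel₀ hx, one_smul]
  rw [e1, e2, Matrix.det_smul, Matrix.det_smul, Matrix.det_one_sub_mul_comm]
  ring

private lemma trace_cfc' {A : Matrix ι ι ℂ} (hA : A.IsHermitian) (f : ℝ → ℝ) :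
    (cfc f A).trace = ((∑ i, f (hA.eigenvalues i) : ℝ) : ℂ) := by
  rw [hA.cfc_eq, Matrix.IsHermitian.cfc, Unitary.conjStarAlgAut_apply, Matrix.trace_mul_comm, ← Matrix.mul_assoc,
    Unitary.star_mul_self_of_mem hA.eigenvectorUnitary.2, Matrix.one_mul, Matrix.trace_diagonal]
  push_cast
  rfl

private lemma specSum_eq_of_charpoly {A : Matrix ι ι ℂ} {B : Matrix κ κ ℂ}
    (hA : A.IsHermitian) (hB : B.IsHermitian)
    (h : A.charpoly = B.charpoly) (f : ℝ → ℝ) :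
    ∑ i, f (hA.eigenvalues i) = ∑ j, f (hB.eigenvalues j) := by
  rw [← sum_f_eigenvalues_eq_roots hA f, ← sum_f_eigenvalues_eq_roots hB f, h]

private lemma specSum_eq_of_charpoly_mul_X {A : Matrix ι ι ℂ} {B : Matrix κ κ ℂ}
    (hA : A.IsHermitian) (hB : B.IsHermitian) {p q : ℕ}
    (h : A.charpoly * X ^ p = B.charpoly * X ^ q) (f : ℝ → ℝ) (hf0 : f 0 = 0) :
    ∑ i, f (hA.eigenvalues i) = ∑ j, f (hB.eigenvalues j) := by
  have h1 := congrArg Polynomial.roots h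
  rw [Polynomial.roots_mul
      (mul_ne_zero A.charpoly_monic.ne_zero (pow_ne_zero _ Polynomial.X_ne_zero)),
    Polynomial.roots_mul
      (mul_ne_zero B.charpoly_monic.ne_zero (pow_ne_zero _ Polynomial.X_ne_zero)),
    ] at h1
  simp only [Polynomial.roots_pow, Polynomial.roots_X] at h1
  have h2 := congrArg (fun m : Multiset ℂ => (m.map (fun z => f z.re)).sum) h1
  simp only [Multiset.map_add, Multiset.sum_add, Multiset.nsmul_singleton, Multiset.map_replicate,
    Multiset.sum_replicate, Complex.zero_re, hf0, smul_zero, add_zero] at h2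
  rwa [sum_f_eigenvalues_eq_roots hA f, sum_f_eigenvalues_eq_roots hB f] at h2

private lemma specSum_add_of_charpoly_mul {D : Matrix κ κ ℂ} {A B : Matrix ι ι ℂ}
    (hD : D.IsHermitian) (hA : A.IsHermitian) (hB : B.IsHermitian)
    (h : D.charpoly = A.charpoly * B.charpoly) (f : ℝ → ℝ) :
    ∑ i, f (hD.eigenvalues i) = ∑ i, f (hA.eigenvalues i) + ∑ i, f (hB.eigenvalues i) := by
  have h1 := congrArg Polynomial.roots h
  rw [Polynomial.roots_mul
      (mul_ne_zero A.charpoly_monic.ne_zero B.charpoly_monic.ne_zero)] at h1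
  have h2 := congrArg (fun m : Multiset ℂ => (m.map (fun z => f z.re)).sum) h1
  simp only [Multiset.map_add, Multiset.sum_add] at h2
  rwa [sum_f_eigenvalues_eq_roots hD f, sum_f_eigenvalues_eq_roots hA f,
    sum_f_eigenvalues_eq_roots hB f] at h2

end Helpers

section Jensen

variable {ι : Type*} [Fintype ι] [DecidableEq ι]

private lemma row_weights {U : Matrix ι ι ℂ} (hU : U * Uᴴ = 1) (i j : ι) :
    ∑ k, U i k * (starRingEnd ℂ) (U j k) = if i = j then 1 else 0 := by
  have h : (U * Uᴴ) i j = (1 : Matrix ι ι ℂ) i j := by rw [hU]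
  simpa [Matrix.mul_apply, Matrix.conjTranspose_apply, Matrix.one_apply] using h

private lemma col_weights {U : Matrix ι ι ℂ} (hU : Uᴴ * U = 1) (k : ι) :
    ∑ i, Complex.normSq (U i k) = 1 := by
  have h : (Uᴴ * U) k k = (1 : Matrix ι ι ℂ) k k := by rw [hU]
  simp only [Matrix.mul_apply, Matrix.conjTranspose_apply, Matrix.one_apply_eq] at h
  have : ((∑ i, Complex.normSq (U i k) : ℝ) : ℂ) = 1 := by
    push_cast
    rw [← h]
    exact Finset.sum_congr rfl fun i _ => by
      rw [Complex.normSq_eq_conj_mul_self]; rfl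
  exact_mod_cast this

private lemma diag_re {N U : Matrix ι ι ℂ} {lam : ι → ℝ}
    (hentry : ∀ i j, N i j = ∑ k, (lam k : ℂ) * (U i k * (starRingEnd ℂ) (U j k))) (i : ι) :
    (N i i).re = ∑ k, Complex.normSq (U i k) * lam k := by
  have : N i i = ((∑ k, Complex.normSq (U i k) * lam k : ℝ) : ℂ) := by
    rw [hentry i i]
    push_cast
    refine Finset.sum_congr rfl fun k _ => ?_
    rw [Complex.mul_conj]
    ring
  rw [this, Complex.ofReal_re]

private lemma sum_weights {U : Matrix ι ι ℂ} (hU : U * Uᴴ = 1) (i : ι) :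
    ∑ k, Complex.normSq (U i k) = 1 := by
  have h := row_weights hU i i
  rw [if_pos rfl] at h
  have : ((∑ k, Complex.normSq (U i k) : ℝ) : ℂ) = 1 := by
    push_cast
    rw [← h]
    exact Finset.sum_congr rfl fun k _ => by rw [Complex.mul_conj]
  exact_mod_cast this

private lemma jensen_core_le {N U : Matrix ι ι ℂ} {lam : ι → ℝ} (hU : U * Uᴴ = 1)
    (hentry : ∀ i j, N i j = ∑ k, (lam k : ℂ) * (U i k * (starRingEnd ℂ) (U j k)))
    (hlam : ∀ k, 0 ≤ lam k)
    {g : ℝ → ℝ} (hg : ConvexOn ℝ (Set.Ici 0) g) (i : ι) :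
    g ((N i i).re) ≤ ∑ k, Complex.normSq (U i k) * g (lam k) := by
  rw [diag_re hentry i]
  have := hg.map_sum_le (t := Finset.univ) (w := fun k => Complex.normSq (U i k)) (p := lam)
    (fun k _ => Complex.normSq_nonneg _) (sum_weights hU i) (fun k _ => hlam k)
  simpa [smul_eq_mul] using this

private lemma jensen_core_eq {N U : Matrix ι ι ℂ} {lam : ι → ℝ} (hU : U * Uᴴ = 1)
    (hentry : ∀ i j, N i j = ∑ k, (lam k : ℂ) * (U i k * (starRingEnd ℂ) (U j k)))
    (hlam : ∀ k, 0 ≤ lam k)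
    {g : ℝ → ℝ} (hg : StrictConvexOn ℝ (Set.Ici 0) g) (i : ι)
    (heq : g ((N i i).re) = ∑ k, Complex.normSq (U i k) * g (lam k)) :
    ∀ j, j ≠ i → N i j = 0 := by
  classical
  intro j hj
  set w : ι → ℝ := fun k => Complex.normSq (U i k) with hw
  set t : Finset ι := Finset.univ.filter (fun k => w k ≠ 0) with ht
  have hfilter : ∀ (f : ι → ℝ), (∀ k, w k = 0 → f k = 0) →
      ∑ k ∈ t, f k = ∑ k, f k := by
    intro f hf
    rw [ht]
    exact Finset.sum_filter_of_ne (fun k _ hfk hw0 => hfk (hf k hw0))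
  have hsum_w : ∑ k ∈ t, w k = 1 := by
    rw [hfilter w (fun k h => h)]
    exact sum_weights hU i
  have h₀ : ∀ k ∈ t, 0 < w k := by
    intro k hk
    rw [ht, Finset.mem_filter] at hk
    exact lt_of_le_of_ne (Complex.normSq_nonneg _) (Ne.symm hk.2)
  have hmem : ∀ k ∈ t, lam k ∈ Set.Ici (0:ℝ) := fun k _ => hlam k
  have hsum1 : ∑ k ∈ t, w k • lam k = (N i i).re := by
    rw [hfilter _ (fun k h => by rw [smul_eq_mul, h, zero_mul]), diag_re hentry i]
    simp [smul_eq_mul, hw]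
  have hsum2 : ∑ k ∈ t, w k • g (lam k) = ∑ k, w k * g (lam k) := by
    rw [hfilter _ (fun k h => by rw [smul_eq_mul, h, zero_mul])]
    simp [smul_eq_mul]
  have hall := hg.eq_of_le_map_sum h₀ hsum_w hmem
    (by rw [hsum2, hsum1]; exact le_of_eq heq.symm)
  have htne : t.Nonempty := by
    by_contra h
    rw [Finset.not_nonempty_iff_eq_empty] at h
    rw [h, Finset.sum_empty] at hsum_w
    exact one_ne_zero hsum_w.symm
  obtain ⟨k₀, hk₀⟩ := htne
  have key : ∀ k, (lam k : ℂ) * (U i k * (starRingEnd ℂ) (U j k))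
      = (lam k₀ : ℂ) * (U i k * (starRingEnd ℂ) (U j k)) := by
    intro k
    by_cases hwk : w k = 0
    · have hU0 : U i k = 0 := Complex.normSq_eq_zero.mp hwk
      rw [hU0]
      ring
    · have hkt : k ∈ t := by rw [ht, Finset.mem_filter]; exact ⟨Finset.mem_univ _, hwk⟩
      rw [hall hkt hk₀]
  rw [hentry i j]
  calc ∑ k, (lam k : ℂ) * (U i k * (starRingEnd ℂ) (U j k))
      = ∑ k, (lam k₀ : ℂ) * (U i k * (starRingEnd ℂ) (U j k)) :=
        Finset.sum_congr rfl (fun k _ => key k)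
    _ = (lam k₀ : ℂ) * ∑ k, U i k * (starRingEnd ℂ) (U j k) := by rw [Finset.mul_sum]
    _ = 0 := by rw [row_weights hU i j, if_neg (Ne.symm hj), mul_zero]

private lemma entry_formula {A : Matrix ι ι ℂ} (hA : A.IsHermitian) (i j : ι) :
    A i j = ∑ k, ((hA.eigenvalues k : ℝ) : ℂ) *
      ((hA.eigenvectorUnitary : Matrix ι ι ℂ) i k *
        (starRingEnd ℂ) ((hA.eigenvectorUnitary : Matrix ι ι ℂ) j k)) := by
  conv_lhs => rw [hA.spectral_theorem, Unitary.conjStarAlgAut_apply]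
  rw [Matrix.mul_apply]
  refine Finset.sum_congr rfl fun k _ => ?_
  rw [Matrix.mul_diagonal, Matrix.star_apply]
  show (hA.eigenvectorUnitary : Matrix ι ι ℂ) i k * ((hA.eigenvalues k : ℝ) : ℂ)
      * (starRingEnd ℂ) ((hA.eigenvectorUnitary : Matrix ι ι ℂ) j k) = _
  ring

end Jensen


/-- The real power `a ^ r` of a matrix, defined via the continuous functional calculus
(for Hermitian/positive semidefinite matrices). -/
noncomputable def mpow {ι : Type*} [Fintype ι] [DecidableEq ι]
    (a : Matrix ι ι ℂ) (r : ℝ) : Matrix ι ι ℂ :=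
  cfc (fun t : ℝ => t ^ r) a

set_option maxHeartbeats 1000000 in
/-- Equality case in the trace power inequality: for `0 < r`, `r ≠ 1` and positive
semidefinite matrices `a, b`, one has `Tr((a+b)^r) = Tr(a^r) + Tr(b^r)` iff `a·b = 0`. -/
theorem trace_rpow_add_eq_iff_mul_eq_zero {n : ℕ} {r : ℝ} (hr0 : 0 < r) (hr1 : r ≠ 1)
    (a b : Matrix (Fin n) (Fin n) ℂ) (ha : a.PosSemidef) (hb : b.PosSemidef) :
    (mpow (a + b) r).trace = (mpow a r).trace + (mpow b r).trace ↔ a * b = 0 := by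
  classical
  set f : ℝ → ℝ := fun t => t ^ r with hf
  have hf0 : f 0 = 0 := Real.zero_rpow hr0.ne'
  have hc : (a + b).PosSemidef := ha.add hb
  set s := (open scoped MatrixOrder in CFC.sqrt a) with hs
  set t := (open scoped MatrixOrder in CFC.sqrt b) with htd
  have hsH : sᴴ = s := (open scoped MatrixOrder in (CFC.sqrt_nonneg a).posSemidef.1)
  have htH : tᴴ = t := (open scoped MatrixOrder in (CFC.sqrt_nonneg b).posSemidef.1)
  have hss : s * s = a := (open scoped MatrixOrder in CFC.sqrt_mul_sqrt_self a ha.nonneg)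
  have htt : t * t = b := (open scoped MatrixOrder in CFC.sqrt_mul_sqrt_self b hb.nonneg)
  set Z : Matrix (Fin n ⊕ Fin n) (Fin n) ℂ := Matrix.fromRows s t with hZ
  have hZH : Zᴴ = Matrix.fromCols s t := by
    rw [hZ, Matrix.conjTranspose_fromRows_eq_fromCols_conjTranspose, hsH, htH]
  have hZZ : Zᴴ * Z = a + b := by
    rw [hZH, hZ, Matrix.fromCols_mul_fromRows, hss, htt]
  set M := Z * Zᴴ with hMdef
  have hMb : M = Matrix.fromBlocks a (s * t) (t * s) b := by
    rw [hMdef, hZH, hZ, Matrix.fromRows_mul_fromCols, hss, htt]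
  have hM : M.PosSemidef := Matrix.posSemidef_self_mul_conjTranspose Z
  have hchar : M.charpoly * Polynomial.X ^ (Fintype.card (Fin n))
      = (a + b).charpoly * Polynomial.X ^ (Fintype.card (Fin n ⊕ Fin n)) := by
    have h := charpoly_mul_conjTranspose_comm Z
    rwa [hZZ, ← hMdef] at h
  have hSMc : ∑ i, f (hM.1.eigenvalues i) = ∑ i, f (hc.1.eigenvalues i) :=
    specSum_eq_of_charpoly_mul_X hM.1 hc.1 hchar f hf0
  have hTc : (mpow (a + b) r).trace = ((∑ i, f (hc.1.eigenvalues i) : ℝ) : ℂ) :=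
    trace_cfc' hc.1 f
  have hTa : (mpow a r).trace = ((∑ i, f (ha.1.eigenvalues i) : ℝ) : ℂ) := trace_cfc' ha.1 f
  have hTb : (mpow b r).trace = ((∑ i, f (hb.1.eigenvalues i) : ℝ) : ℂ) := trace_cfc' hb.1 f
  constructor
  · intro h
    have hreal : ∑ i, f (hc.1.eigenvalues i)
        = ∑ i, f (ha.1.eigenvalues i) + ∑ i, f (hb.1.eigenvalues i) := by
      rw [hTc, hTa, hTb, ← Complex.ofReal_add] at h
      exact_mod_cast h
    set Ua : Matrix (Fin n) (Fin n) ℂ := (ha.1.eigenvectorUnitary : Matrix (Fin n) (Fin n) ℂ) with hUad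
    set Ub : Matrix (Fin n) (Fin n) ℂ := (hb.1.eigenvectorUnitary : Matrix (Fin n) (Fin n) ℂ) with hUbd
    have hUa1 : Uaᴴ * Ua = 1 := by
      rw [← Matrix.star_eq_conjTranspose]
      exact Unitary.star_mul_self_of_mem ha.1.eigenvectorUnitary.2
    have hUa2 : Ua * Uaᴴ = 1 := by
      rw [← Matrix.star_eq_conjTranspose]
      exact Unitary.mul_star_self_of_mem ha.1.eigenvectorUnitary.2
    have hUb1 : Ubᴴ * Ub = 1 := by
      rw [← Matrix.star_eq_conjTranspose]
      exact Unitary.star_mul_self_of_mem hb.1.eigenvectorUnitary.2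
    have hUb2 : Ub * Ubᴴ = 1 := by
      rw [← Matrix.star_eq_conjTranspose]
      exact Unitary.mul_star_self_of_mem hb.1.eigenvectorUnitary.2
    set V : Matrix (Fin n ⊕ Fin n) (Fin n ⊕ Fin n) ℂ := Matrix.fromBlocks Ua 0 0 Ub with hVd
    have hVH : Vᴴ = Matrix.fromBlocks Uaᴴ 0 0 Ubᴴ := by
      rw [hVd, Matrix.fromBlocks_conjTranspose]
      simp
    have hV1 : Vᴴ * V = 1 := by
      rw [hVH, hVd, Matrix.fromBlocks_multiply]
      simp [hUa1, hUb1, Matrix.fromBlocks_one]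
    set N := Vᴴ * M * V with hNdef
    have hN : N.PosSemidef := hM.conjTranspose_mul_mul_same V
    have hSN : ∑ i, f (hN.1.eigenvalues i) = ∑ i, f (hM.1.eigenvalues i) :=
      specSum_eq_of_charpoly hN.1 hM.1 (charpoly_conj_unitary M hV1) f
    have hNb : N = Matrix.fromBlocks (Uaᴴ * a * Ua) (Uaᴴ * (s * t) * Ub)
        (Ubᴴ * (t * s) * Ua) (Ubᴴ * b * Ub) := by
      rw [hNdef, hMb, hVH, hVd, Matrix.fromBlocks_multiply, Matrix.fromBlocks_multiply]
      simp [Matrix.mul_assoc]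
    have hdiagA : Uaᴴ * a * Ua = Matrix.diagonal (RCLike.ofReal ∘ ha.1.eigenvalues) := by
      rw [← Matrix.star_eq_conjTranspose]
      have := ha.1.conjStarAlgAut_star_eigenvectorUnitary
      rwa [Unitary.conjStarAlgAut_apply, Unitary.coe_star, star_star] at this
    have hdiagB : Ubᴴ * b * Ub = Matrix.diagonal (RCLike.ofReal ∘ hb.1.eigenvalues) := by
      rw [← Matrix.star_eq_conjTranspose]
      have := hb.1.conjStarAlgAut_star_eigenvectorUnitary
      rwa [Unitary.conjStarAlgAut_apply, Unitary.coe_star, star_star] at this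
    have hdiag : ∀ i : Fin n ⊕ Fin n,
        (N i i).re = Sum.elim (fun i => ha.1.eigenvalues i) (fun i => hb.1.eigenvalues i) i := by
      intro i
      cases i with
      | inl i =>
          rw [hNb]
          show ((Uaᴴ * a * Ua) i i).re = _
          rw [hdiagA]
          simp
      | inr i =>
          rw [hNb]
          show ((Ubᴴ * b * Ub) i i).re = _
          rw [hdiagB]
          simp
    set W : Matrix (Fin n ⊕ Fin n) (Fin n ⊕ Fin n) ℂ := (hN.1.eigenvectorUnitary : Matrix (Fin n ⊕ Fin n) (Fin n ⊕ Fin n) ℂ) with hWd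
    have hW2 : W * Wᴴ = 1 := by
      rw [← Matrix.star_eq_conjTranspose]
      exact Unitary.mul_star_self_of_mem hN.1.eigenvectorUnitary.2
    have hW1 : Wᴴ * W = 1 := by
      rw [← Matrix.star_eq_conjTranspose]
      exact Unitary.star_mul_self_of_mem hN.1.eigenvectorUnitary.2
    have hentry : ∀ i j, N i j = ∑ k, ((hN.1.eigenvalues k : ℝ) : ℂ) *
        (W i k * (starRingEnd ℂ) (W j k)) := fun i j => entry_formula hN.1 i j
    have hlam : ∀ k, 0 ≤ hN.1.eigenvalues k := hN.eigenvalues_nonneg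
    have hTsum : ∀ (g : ℝ → ℝ),
        ∑ i, (∑ k, Complex.normSq (W i k) * g (hN.1.eigenvalues k))
          = ∑ k, g (hN.1.eigenvalues k) := by
      intro g
      rw [Finset.sum_comm]
      refine Finset.sum_congr rfl fun k _ => ?_
      rw [← Finset.sum_mul, col_weights hW1 k, one_mul]
    have hdsum : ∑ i, f ((N i i).re) = ∑ k, f (hN.1.eigenvalues k) := by
      calc ∑ i, f ((N i i).re)
          = ∑ i : Fin n ⊕ Fin n,
              f (Sum.elim (fun i => ha.1.eigenvalues i) (fun i => hb.1.eigenvalues i) i) :=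
            Finset.sum_congr rfl fun i _ => by rw [hdiag i]
        _ = ∑ i, f (ha.1.eigenvalues i) + ∑ i, f (hb.1.eigenvalues i) := by
            rw [Fintype.sum_sum_type]
            rfl
        _ = ∑ i, f (hc.1.eigenvalues i) := hreal.symm
        _ = ∑ i, f (hM.1.eigenvalues i) := hSMc.symm
        _ = ∑ k, f (hN.1.eigenvalues k) := hSN.symm
    have main : ∀ g : ℝ → ℝ, StrictConvexOn ℝ (Set.Ici 0) g →
        (∑ i, g ((N i i).re) = ∑ k, g (hN.1.eigenvalues k)) →
        ∀ (i0 j0 : Fin n), N (Sum.inl i0) (Sum.inr j0) = 0 := by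
      intro g hg hsum i0 j0
      have hle : ∀ i ∈ Finset.univ, g ((N i i).re)
          ≤ ∑ k, Complex.normSq (W i k) * g (hN.1.eigenvalues k) :=
        fun i _ => jensen_core_le hW2 hentry hlam hg.convexOn i
      have hsumeq : ∑ i, g ((N i i).re)
          = ∑ i, ∑ k, Complex.normSq (W i k) * g (hN.1.eigenvalues k) := by
        rw [hTsum g, hsum]
      have heach := (Finset.sum_eq_sum_iff_of_le hle).mp hsumeq
      exact jensen_core_eq hW2 hentry hlam hg (Sum.inl i0)
        (heach _ (Finset.mem_univ _)) (Sum.inr j0) (by simp)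
    have h0 : ∀ (i0 j0 : Fin n), N (Sum.inl i0) (Sum.inr j0) = 0 := by
      rcases lt_or_gt_of_ne hr1 with hrlt | hrgt
      · refine main (fun x => -(f x)) ?_ ?_
        · exact (Real.strictConcaveOn_rpow hr0 hrlt).neg
        · rw [Finset.sum_neg_distrib, Finset.sum_neg_distrib, hdsum]
      · exact main f (strictConvexOn_rpow hrgt) hdsum
    have hblock : Uaᴴ * (s * t) * Ub = 0 := by
      ext i0 j0
      have h1 := h0 i0 j0
      rw [hNb] at h1
      simpa using h1
    have hst : s * t = 0 := by
      have h1 : Ua * (Uaᴴ * (s * t) * Ub) * Ubᴴ = 0 := by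
        rw [hblock]
        simp
      calc s * t = (Ua * Uaᴴ) * (s * t) * (Ub * Ubᴴ) := by rw [hUa2, hUb2, Matrix.one_mul, Matrix.mul_one]
        _ = Ua * (Uaᴴ * (s * t) * Ub) * Ubᴴ := by simp only [Matrix.mul_assoc]
        _ = 0 := h1
    calc a * b = (s * s) * (t * t) := by rw [hss, htt]
      _ = s * (s * t) * t := by simp only [Matrix.mul_assoc]
      _ = 0 := by rw [hst]; simp
  · intro hab
    have hbH : bᴴ = b := hb.1
    have hsb : s * b = 0 := by
      apply Matrix.conjTranspose_mul_self_eq_zero.mp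
      calc (s * b)ᴴ * (s * b) = b * (s * (s * b)) := by
            simp only [Matrix.conjTranspose_mul, hsH, hbH, Matrix.mul_assoc]
        _ = b * (a * b) := by rw [← Matrix.mul_assoc s s b, hss]
        _ = 0 := by rw [hab, Matrix.mul_zero]
    have hst : s * t = 0 := by
      apply Matrix.self_mul_conjTranspose_eq_zero.mp
      calc (s * t) * (s * t)ᴴ = s * (t * (t * s)) := by
            simp only [Matrix.conjTranspose_mul, hsH, htH, Matrix.mul_assoc]
        _ = s * (b * s) := by rw [← Matrix.mul_assoc t t s, htt]
        _ = (s * b) * s := by rw [Matrix.mul_assoc]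
        _ = 0 := by rw [hsb, Matrix.zero_mul]
    have hts : t * s = 0 := by
      have h1 := congrArg Matrix.conjTranspose hst
      simpa [Matrix.conjTranspose_mul, hsH, htH] using h1
    have hMb0 : M = Matrix.fromBlocks a 0 0 b := by rw [hMb, hst, hts]
    have hcharM : M.charpoly = a.charpoly * b.charpoly := by
      rw [hMb0]
      exact Matrix.charpoly_fromBlocks_zero₂₁ a 0 b
    have hsplit : ∑ i, f (hM.1.eigenvalues i)
        = ∑ i, f (ha.1.eigenvalues i) + ∑ i, f (hb.1.eigenvalues i) :=
      specSum_add_of_charpoly_mul hM.1 ha.1 hb.1 hcharM f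
    rw [hTc, hTa, hTb, ← Complex.ofReal_add]
    exact congrArg _ (by rw [← hSMc, hsplit])
end

section
/- Let X be a p-Banach space (0 < p ≤ 1) containing a basic sequence equivalent to the unit vector basis of ℓ^p. Then for every ε > 0, X contains a basic sequence consisting of successive blocks of the initial basis that is (1+ε)-equivalent to the unit vector basis of ℓ^p. -/
/-- James distortion theorem in `p`-Banach spaces, `0 < p ≤ 1`.  Let `X` be a vector
space with a complete `p`-norm `N`, and `(x_n)` a sequence in `X` equivalent to the unit
vector basis of `ℓ^p`.  Then for every `ε > 0` there is a sequence of successive blocks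
of `(x_n)` which is `(1+ε)`-equivalent to the unit vector basis of `ℓ^p`. -/
theorem james_distortion_p_banach
    {X : Type*} [AddCommGroup X] [Module ℝ X] {p : ℝ} (hp0 : 0 < p) (hp1 : p ≤ 1)
    (N : X → ℝ)
    (hN0 : ∀ v, 0 ≤ N v)
    (hNeq : ∀ v, N v = 0 ↔ v = 0)
    (hNsmul : ∀ (c : ℝ) (v : X), N (c • v) = |c| * N v)
    (hNadd : ∀ v w, N (v + w) ^ p ≤ N v ^ p + N w ^ p)
    -- completeness of `X` for the metric induced by the `p`-norm
    (hcomplete : ∀ u : ℕ → X,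
      (∀ ε > (0 : ℝ), ∃ n₀, ∀ m ≥ n₀, ∀ n ≥ n₀, N (u m - u n) < ε) →
      ∃ l : X, ∀ ε > (0 : ℝ), ∃ n₀, ∀ n ≥ n₀, N (u n - l) < ε)
    (x : ℕ → X) {a b : ℝ} (ha : 0 < a) (hb : 0 < b)
    (hlow : ∀ (s : Finset ℕ) (c : ℕ → ℝ),
      a * (∑ n ∈ s, |c n| ^ p) ^ (1 / p) ≤ N (∑ n ∈ s, c n • x n))
    (hup : ∀ (s : Finset ℕ) (c : ℕ → ℝ),
      N (∑ n ∈ s, c n • x n) ≤ b * (∑ n ∈ s, |c n| ^ p) ^ (1 / p)) :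
    ∀ ε > (0 : ℝ), ∃ (J : ℕ → Finset ℕ) (c : ℕ → ℝ) (y : ℕ → X) (a' b' : ℝ),
      (∀ k, (J k).Nonempty) ∧
      (∀ k, ∀ i ∈ J k, ∀ j ∈ J (k + 1), i < j) ∧
      (∀ k, y k = ∑ n ∈ J k, c n • x n) ∧
      0 < a' ∧ 0 < b' ∧ b' / a' ≤ 1 + ε ∧
      (∀ (s : Finset ℕ) (lam : ℕ → ℝ),
        a' * (∑ k ∈ s, |lam k| ^ p) ^ (1 / p) ≤ N (∑ k ∈ s, lam k • y k) ∧
        N (∑ k ∈ s, lam k • y k) ≤ b' * (∑ k ∈ s, |lam k| ^ p) ^ (1 / p)) := by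
  intro ε hε
  classical
  have hp0' : p ≠ 0 := ne_of_gt hp0
  have h1p : (1 / p) ≠ 0 := one_div_ne_zero hp0'
  have hN0z : N 0 = 0 := by
    have := hNsmul 0 0
    simpa using this
  -- finite p-triangle inequality
  have hsum : ∀ (u : Finset ℕ) (v : ℕ → X),
      N (∑ i ∈ u, v i) ^ p ≤ ∑ i ∈ u, N (v i) ^ p := by
    intro u v
    induction u using Finset.cons_induction with
    | empty => simp [hN0z, Real.zero_rpow hp0']
    | cons i u hi ih =>
      rw [Finset.sum_cons, Finset.sum_cons]
      exact le_trans (hNadd _ _) (by linarith)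
  -- sets of norms of normalized blocks supported past m
  set S : ℕ → Set ℝ := fun m => { r | ∃ (J : Finset ℕ) (cc : ℕ → ℝ),
      J.Nonempty ∧ (∀ n ∈ J, m ≤ n) ∧ (∑ n ∈ J, |cc n| ^ p) = 1 ∧
      r = N (∑ n ∈ J, cc n • x n) } with hSdef
  have hSmem : ∀ m, N (x m) ∈ S m := by
    intro m
    refine ⟨{m}, fun _ => 1, Finset.singleton_nonempty m, ?_, ?_, ?_⟩
    · intro n hn; simp at hn; omega
    · simp [Real.one_rpow]
    · simp
  have hSne : ∀ m, (S m).Nonempty := fun m => ⟨_, hSmem m⟩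
  have hSbdd : ∀ m, ∀ r ∈ S m, a ≤ r := by
    rintro m r ⟨J, cc, _, _, hnorm, rfl⟩
    have := hlow J cc
    rwa [hnorm, Real.one_rpow, mul_one] at this
  set A : ℕ → ℝ := fun m => sInf (S m) with hAdef
  have hAa : ∀ m, a ≤ A m := fun m => le_csInf (hSne m) (hSbdd m)
  have hAb : ∀ m, A m ≤ b := by
    intro m
    have h1 : A m ≤ N (x m) := csInf_le ⟨a, hSbdd m⟩ (hSmem m)
    have h2 : N (x m) ≤ b := by
      have := hup {m} (fun _ => 1)
      simpa [Real.one_rpow] using this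
    linarith
  have hrb : BddAbove (Set.range A) := ⟨b, by rintro r ⟨m, rfl⟩; exact hAb m⟩
  set t : ℝ := sSup (Set.range A) with htdef
  have hta : a ≤ t := le_trans (hAa 0) (le_csSup hrb ⟨0, rfl⟩)
  have ht : 0 < t := lt_of_lt_of_le ha hta
  set η : ℝ := t * ε / (2 + ε) with hηdef
  have hη : 0 < η := by
    apply div_pos (mul_pos ht hε); linarith
  have hηt : η < t := by
    rw [hηdef, div_lt_iff₀ (by linarith : (0:ℝ) < 2 + ε)]
    nlinarith
  -- choose m₀ with A m₀ > t - η
  obtain ⟨r₀, ⟨m₀, rfl⟩, hm₀⟩ : ∃ r ∈ Set.range A, t - η < r :=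
    exists_lt_of_lt_csSup ⟨A 0, ⟨0, rfl⟩⟩ (by linarith)
  -- in every tail there is a normalized block of norm < t + η
  have hP : ∀ m, ∃ (J : Finset ℕ) (cc : ℕ → ℝ),
      J.Nonempty ∧ (∀ n ∈ J, m ≤ n) ∧ (∑ n ∈ J, |cc n| ^ p) = 1 ∧
      N (∑ n ∈ J, cc n • x n) < t + η := by
    intro m
    have hAle : A m ≤ t := le_csSup hrb ⟨m, rfl⟩
    obtain ⟨r, hr, hrlt⟩ := exists_lt_of_csInf_lt (hSne m) (show sInf (S m) < t + η by
      change A m < t + η; linarith)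
    obtain ⟨J, cc, hne, hlo, hnorm, rfl⟩ := hr
    exact ⟨J, cc, hne, hlo, hnorm, hrlt⟩
  choose Jf cf h1 h2 h3 h4 using hP
  -- successive blocks
  let mseq : ℕ → ℕ := fun k => Nat.rec m₀ (fun _ mk => (Jf mk).max' (h1 mk) + 1) k
  have hmseq0 : mseq 0 = m₀ := rfl
  have hmseqS : ∀ k, mseq (k + 1) = (Jf (mseq k)).max' (h1 (mseq k)) + 1 := fun k => rfl
  set J : ℕ → Finset ℕ := fun k => Jf (mseq k) with hJdef
  have hJne : ∀ k, (J k).Nonempty := fun k => h1 (mseq k)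
  have hJlow : ∀ k, ∀ n ∈ J k, mseq k ≤ n := fun k => h2 (mseq k)
  have hJhigh : ∀ k, ∀ n ∈ J k, n < mseq (k + 1) := by
    intro k n hn
    rw [hmseqS k]
    exact Nat.lt_succ_of_le (Finset.le_max' _ n hn)
  have hmono : ∀ k, mseq k < mseq (k + 1) := by
    intro k
    obtain ⟨n, hn⟩ := hJne k
    exact lt_of_le_of_lt (hJlow k n hn) (hJhigh k n hn)
  have hmono' : Monotone mseq := monotone_nat_of_le_succ (fun k => le_of_lt (hmono k))
  have hm₀le : ∀ k, m₀ ≤ mseq k := fun k => hmseq0 ▸ hmono' (Nat.zero_le k)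
  have hsep : ∀ k k', k < k' → ∀ n ∈ J k, ∀ n' ∈ J k', n < n' := by
    intro k k' hkk' n hn n' hn'
    calc n < mseq (k + 1) := hJhigh k n hn
      _ ≤ mseq k' := hmono' hkk'
      _ ≤ n' := hJlow k' n' hn'
  have huniq : ∀ k k' n, n ∈ J k → n ∈ J k' → k = k' := by
    intro k k' n hn hn'
    rcases lt_trichotomy k k' with h | h | h
    · exact absurd (hsep k k' h n hn n hn') (lt_irrefl n)
    · exact h
    · exact absurd (hsep k' k h n hn' n hn) (lt_irrefl n)
  -- global coefficient function
  set c : ℕ → ℝ := fun n => if h : ∃ k, n ∈ J k then cf (mseq h.choose) n else 0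
    with hcdef
  have hc : ∀ k, ∀ n ∈ J k, c n = cf (mseq k) n := by
    intro k n hn
    have h : ∃ k', n ∈ J k' := ⟨k, hn⟩
    have e : c n = cf (mseq h.choose) n := by rw [hcdef]; exact dif_pos h
    rw [e, huniq h.choose k n h.choose_spec hn]
  set y : ℕ → X := fun k => ∑ n ∈ J k, c n • x n with hydef
  have hynorm : ∀ k, (∑ n ∈ J k, |c n| ^ p) = 1 := by
    intro k
    rw [Finset.sum_congr rfl (fun n hn => by rw [hc k n hn])]
    exact h3 (mseq k)
  have hyN : ∀ k, N (y k) < t + η := by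
    intro k
    have : y k = ∑ n ∈ J k, cf (mseq k) n • x n := by
      rw [hydef]
      exact Finset.sum_congr rfl (fun n hn => by rw [hc k n hn])
    rw [this]
    exact h4 (mseq k)
  -- the constants
  have ha' : 0 < A m₀ := lt_of_lt_of_le ha (hAa m₀)
  have hb' : 0 < t + η := by linarith
  refine ⟨J, c, y, A m₀, t + η, hJne,
    fun k i hi j hj => hsep k (k + 1) (Nat.lt_succ_self k) i hi j hj,
    fun k => rfl, ha', hb', ?_, ?_⟩
  · -- ratio estimate
    rw [div_le_iff₀ ha']
    have key : t + η = (1 + ε) * (t - η) := by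
      rw [hηdef]; field_simp; ring
    rw [key]
    apply mul_le_mul_of_nonneg_left (le_of_lt hm₀) (by linarith)
  · -- equivalence estimates
    intro s lam
    set Λ : ℝ := ∑ k ∈ s, |lam k| ^ p with hΛdef
    have hterm : ∀ k ∈ s, (0:ℝ) ≤ |lam k| ^ p :=
      fun k _ => Real.rpow_nonneg (abs_nonneg _) p
    have hΛ0 : 0 ≤ Λ := Finset.sum_nonneg hterm
    have hdisj : (↑s : Set ℕ).PairwiseDisjoint J := by
      intro k _ k' _ hne
      simp only [Function.onFun]
      rw [Finset.disjoint_left]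
      intro n hn hn'
      exact hne (huniq k k' n hn hn')
    set d : ℕ → ℝ := fun n => if h : ∃ k, n ∈ J k then lam h.choose * c n else 0
      with hddef
    have hd : ∀ k, ∀ n ∈ J k, d n = lam k * c n := by
      intro k n hn
      have h : ∃ k', n ∈ J k' := ⟨k, hn⟩
      have e : d n = lam h.choose * c n := by rw [hddef]; exact dif_pos h
      rw [e, huniq h.choose k n h.choose_spec hn]
    set T : Finset ℕ := s.biUnion J with hTdef
    have hz : ∑ k ∈ s, lam k • y k = ∑ n ∈ T, d n • x n := by
      rw [hTdef, Finset.sum_biUnion hdisj]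
      refine Finset.sum_congr rfl fun k _ => ?_
      rw [hydef, Finset.smul_sum]
      exact Finset.sum_congr rfl fun n hn => by rw [hd k n hn, smul_smul]
    have hcoef : ∑ n ∈ T, |d n| ^ p = Λ := by
      rw [hTdef, Finset.sum_biUnion hdisj, hΛdef]
      refine Finset.sum_congr rfl fun k _ => ?_
      calc ∑ n ∈ J k, |d n| ^ p
          = ∑ n ∈ J k, |lam k| ^ p * |c n| ^ p := by
            refine Finset.sum_congr rfl fun n hn => ?_
            rw [hd k n hn, abs_mul, Real.mul_rpow (abs_nonneg _) (abs_nonneg _)]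
        _ = |lam k| ^ p := by rw [← Finset.mul_sum, hynorm k, mul_one]
    have hTlow : ∀ n ∈ T, m₀ ≤ n := by
      intro n hn
      rw [hTdef] at hn
      obtain ⟨k, _, hk⟩ := Finset.mem_biUnion.mp hn
      exact le_trans (hm₀le k) (hJlow k n hk)
    set M : ℝ := Λ ^ (1 / p) with hMdef
    have hMnn : 0 ≤ M := Real.rpow_nonneg hΛ0 _
    have hMp : M ^ p = Λ := by
      rw [hMdef, ← Real.rpow_mul hΛ0, one_div_mul_cancel hp0', Real.rpow_one]
    constructor
    · -- lower bound
      rcases eq_or_lt_of_le hΛ0 with h0 | hpos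
      · have hlam0 : ∀ k ∈ s, lam k = 0 := by
          intro k hk
          have hk0 := (Finset.sum_eq_zero_iff_of_nonneg hterm).mp h0.symm k hk
          have habs : |lam k| = 0 :=
            ((Real.rpow_eq_zero_iff_of_nonneg (abs_nonneg _)).mp hk0).1
          exact abs_eq_zero.mp habs
        have hzero : ∑ k ∈ s, lam k • y k = 0 :=
          Finset.sum_eq_zero fun k hk => by rw [hlam0 k hk, zero_smul]
        have hM0 : M = 0 := by
          rw [hMdef, ← h0, Real.zero_rpow h1p]
        rw [hzero, hN0z, hM0, mul_zero]
      · -- Λ > 0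
        have hM : 0 < M := Real.rpow_pos_of_pos hpos _
        have hTne : T.Nonempty := by
          have hΛne : Λ ≠ 0 := ne_of_gt hpos
          obtain ⟨k, hk, hkne⟩ := Finset.exists_ne_zero_of_sum_ne_zero
            (show ∑ k ∈ s, |lam k| ^ p ≠ 0 from hΛdef ▸ hΛne)
          obtain ⟨n, hn⟩ := hJne k
          exact ⟨n, Finset.mem_biUnion.mpr ⟨k, hk, hn⟩⟩
        have hmem : N (∑ n ∈ T, (M⁻¹ * d n) • x n) ∈ S m₀ := by
          refine ⟨T, fun n => M⁻¹ * d n, hTne, hTlow, ?_, rfl⟩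
          have : ∀ n ∈ T, |M⁻¹ * d n| ^ p = Λ⁻¹ * |d n| ^ p := by
            intro n _
            rw [abs_mul, Real.mul_rpow (abs_nonneg _) (abs_nonneg _),
              abs_of_pos (inv_pos.mpr hM), Real.inv_rpow hMnn, hMp]
          rw [Finset.sum_congr rfl this, ← Finset.mul_sum, hcoef,
            inv_mul_cancel₀ (ne_of_gt hpos)]
        have hA : A m₀ ≤ N (∑ n ∈ T, (M⁻¹ * d n) • x n) :=
          csInf_le ⟨a, hSbdd m₀⟩ hmem
        have heq : (∑ n ∈ T, (M⁻¹ * d n) • x n) = M⁻¹ • ∑ n ∈ T, d n • x n := by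
          rw [Finset.smul_sum]
          exact Finset.sum_congr rfl fun n _ => (smul_smul _ _ _).symm
        rw [heq, hNsmul, abs_of_pos (inv_pos.mpr hM)] at hA
        rw [hz]
        calc A m₀ * M ≤ (M⁻¹ * N (∑ n ∈ T, d n • x n)) * M :=
              mul_le_mul_of_nonneg_right hA hMnn
          _ = N (∑ n ∈ T, d n • x n) := by
              field_simp
    · -- upper bound
      have h5 : N (∑ k ∈ s, lam k • y k) ^ p ≤ ∑ k ∈ s, N (lam k • y k) ^ p :=
        hsum s _
      have h6 : ∀ k ∈ s, N (lam k • y k) ^ p ≤ (t + η) ^ p * |lam k| ^ p := by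
        intro k _
        rw [hNsmul, Real.mul_rpow (abs_nonneg _) (hN0 _)]
        rw [mul_comm ((t + η) ^ p) _]
        exact mul_le_mul_of_nonneg_left
          (Real.rpow_le_rpow (hN0 _) (le_of_lt (hyN k)) (le_of_lt hp0))
          (Real.rpow_nonneg (abs_nonneg _) p)
      have h7 : N (∑ k ∈ s, lam k • y k) ^ p ≤ ((t + η) * M) ^ p := by
        rw [Real.mul_rpow (le_of_lt hb') hMnn, hMp]
        calc N (∑ k ∈ s, lam k • y k) ^ p ≤ ∑ k ∈ s, N (lam k • y k) ^ p := h5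
          _ ≤ ∑ k ∈ s, (t + η) ^ p * |lam k| ^ p := Finset.sum_le_sum h6
          _ = (t + η) ^ p * Λ := by rw [← Finset.mul_sum, hΛdef]
      exact (Real.rpow_le_rpow_iff (hN0 _) (mul_nonneg (le_of_lt hb') hMnn) hp0).mp h7
end

section
/- Let 2 < p < ∞ and let (f_n) be a sequence in L^p(μ) and h ∈ L^r(μ) with 1/r = 1/2 − 1/p, such that inf_n ‖f_n h‖_2 = c > 0, sup_n ‖f_n‖_p = M < ∞, and (f_n) is unconditional. Then (f_n) is equivalent to the unit vector basis of ℓ^2. -/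
open MeasureTheory
open scoped ENNReal
open scoped Nat

/-! Auxiliary combinatorial lemmas: signed sums over the discrete cube. -/

/-- signed sum -/
noncomputable def ssum (a : ℕ → ℝ) (s t : Finset ℕ) : ℝ :=
  ∑ n ∈ s, (if n ∈ t then (1:ℝ) else -1) * a n

lemma ssum_insert_decomp {k : ℕ} {s : Finset ℕ} (hk : k ∉ s) (a : ℕ → ℝ) (g : ℝ → ℝ) :
    ∑ t ∈ (insert k s).powerset, g (ssum a (insert k s) t)
      = ∑ t ∈ s.powerset, (g (ssum a s t - a k) + g (ssum a s t + a k)) := by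
  rw [Finset.sum_powerset_insert hk, Finset.sum_add_distrib]
  congr 1
  · refine Finset.sum_congr rfl fun t ht => ?_
    have hkt : k ∉ t := fun hmem => hk (Finset.mem_powerset.1 ht hmem)
    congr 1
    rw [ssum, Finset.sum_insert hk, if_neg hkt, ssum]
    ring
  · refine Finset.sum_congr rfl fun t ht => ?_
    congr 1
    rw [ssum, Finset.sum_insert hk, if_pos (Finset.mem_insert_self k t), ssum]
    have : ∀ n ∈ s, (if n ∈ insert k t then (1:ℝ) else -1) * a n
        = (if n ∈ t then (1:ℝ) else -1) * a n := by
      intro n hn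
      have hnk : n ≠ k := fun hEq => hk (hEq ▸ hn)
      simp [Finset.mem_insert, hnk]
    rw [Finset.sum_congr rfl this]
    ring

lemma ssum_sq_identity (s : Finset ℕ) (a : ℕ → ℝ) :
    ∑ t ∈ s.powerset, (ssum a s t)^2 = 2^s.card * ∑ n ∈ s, a n^2 := by
  induction s using Finset.induction with
  | empty => simp [ssum]
  | @insert k s hk ih =>
    rw [ssum_insert_decomp hk a (fun x => x^2), Finset.card_insert_of_notMem hk,
      Finset.sum_insert hk]
    have : ∀ t ∈ s.powerset, (ssum a s t - a k)^2 + (ssum a s t + a k)^2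
        = 2 * (ssum a s t)^2 + 2 * a k ^2 := fun t _ => by ring
    rw [Finset.sum_congr rfl this, Finset.sum_add_distrib, ← Finset.mul_sum, ih,
      Finset.sum_const, Finset.card_powerset, nsmul_eq_mul]
    push_cast
    ring

/-- binomial identity for even powers -/
lemma even_binom_sum (x b : ℝ) (j : ℕ) :
    (x - b)^(2*j) + (x + b)^(2*j)
      = ∑ i ∈ Finset.range (j+1),
          2 * ((2*j).choose (2*i) : ℝ) * x^(2*i) * b^(2*(j-i)) := by
  have h2 : x - b = x + (-b) := by ring
  rw [h2, add_pow, add_pow, ← Finset.sum_add_distrib]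
  set G : ℕ → ℝ := fun k =>
    x ^ k * (-b) ^ (2*j - k) * ((2*j).choose k : ℝ)
      + x ^ k * b ^ (2*j - k) * ((2*j).choose k : ℝ) with hG
  have himg : (Finset.range (j+1)).image (fun i => 2*i) ⊆ Finset.range (2*j+1) := by
    intro k hk
    simp only [Finset.mem_image, Finset.mem_range] at hk ⊢
    obtain ⟨i, hi, rfl⟩ := hk; omega
  have hzero : ∀ k ∈ Finset.range (2*j+1),
      k ∉ (Finset.range (j+1)).image (fun i => 2*i) → G k = 0 := by
    intro k hk hk'
    have hodd : Odd k := by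
      by_contra hev
      rw [Nat.not_odd_iff_even] at hev
      obtain ⟨i, hi⟩ := hev
      apply hk'
      simp only [Finset.mem_image, Finset.mem_range] at hk ⊢
      exact ⟨i, by omega, by omega⟩
    have hk2 : k ≤ 2*j := by simp only [Finset.mem_range] at hk; omega
    have hodd' : Odd (2*j - k) := Nat.Even.sub_odd hk2 (even_two_mul j) hodd
    have : (-b) ^ (2*j - k) = -(b ^ (2*j-k)) := hodd'.neg_pow b
    rw [hG]; simp only []; rw [this]; ring
  have := Finset.sum_subset himg hzero
  rw [← this, Finset.sum_image (by intro x _ y _ h; simp only at h; omega)]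
  refine Finset.sum_congr rfl fun i hi => ?_
  have hij : i ≤ j := by simp only [Finset.mem_range] at hi; omega
  have hsub : 2*j - 2*i = 2*(j-i) := by omega
  have hev : Even (2*(j-i)) := even_two_mul _
  rw [hG]; simp only []
  rw [hsub, hev.neg_pow]
  ring

lemma choose_factorial_le (j i : ℕ) (hij : i ≤ j) :
    ((2*j).choose (2*i)) * (2*i)! ≤ (2*j)! * (j.choose i) := by
  have h1 : (2*j).choose (2*i) * (2*i)! * (2*j - 2*i)! = (2*j)! :=
    Nat.choose_mul_factorial_mul_factorial (by omega)
  have h2 : (2*j).choose (2*i) * (2*i)! ≤ (2*j)! := by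
    calc (2*j).choose (2*i) * (2*i)! ≤ (2*j).choose (2*i) * (2*i)! * (2*j - 2*i)! :=
          Nat.le_mul_of_pos_right _ (Nat.factorial_pos _)
      _ = (2*j)! := h1
  calc (2*j).choose (2*i) * (2*i)! ≤ (2*j)! := h2
    _ ≤ (2*j)! * (j.choose i) := Nat.le_mul_of_pos_right _ (Nat.choose_pos hij)

lemma ssum_even_moment (s : Finset ℕ) (a : ℕ → ℝ) : ∀ j : ℕ,
    ∑ t ∈ s.powerset, (ssum a s t)^(2*j)
      ≤ 2^s.card * ((2*j)! : ℝ) * (∑ n ∈ s, a n^2)^j := by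
  induction s using Finset.induction with
  | empty =>
    intro j
    rcases Nat.eq_zero_or_pos j with hj | hj
    · subst hj; simp [ssum]
    · have : (0:ℝ)^(2*j) = 0 := by
        apply zero_pow; omega
      simp only [Finset.powerset_empty, Finset.sum_singleton, ssum, Finset.sum_empty,
        Finset.card_empty, pow_zero, one_mul]
      rw [this, zero_pow (by omega : j ≠ 0), mul_zero]
  | @insert k s hk ih =>
    intro j
    have hQ : (0:ℝ) ≤ ∑ n ∈ s, a n^2 := Finset.sum_nonneg fun n _ => sq_nonneg _
    set Q : ℝ := ∑ n ∈ s, a n^2 with hQdef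
    rw [ssum_insert_decomp hk a (fun x => x^(2*j)), Finset.card_insert_of_notMem hk,
      Finset.sum_insert hk]
    have hexp : ∀ t ∈ s.powerset, (ssum a s t - a k)^(2*j) + (ssum a s t + a k)^(2*j)
        = ∑ i ∈ Finset.range (j+1),
            2 * ((2*j).choose (2*i) : ℝ) * (ssum a s t)^(2*i) * (a k)^(2*(j-i)) :=
      fun t _ => even_binom_sum _ _ _
    rw [Finset.sum_congr rfl hexp, Finset.sum_comm]
    have hbound : ∀ i ∈ Finset.range (j+1),
        (∑ t ∈ s.powerset, 2 * ((2*j).choose (2*i) : ℝ) * (ssum a s t)^(2*i) * (a k)^(2*(j-i)))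
          ≤ 2 * 2^s.card * ((2*j)! : ℝ) * (j.choose i : ℝ) * (a k^2)^(j-i) * Q^i := by
      intro i hi
      have hij : i ≤ j := by simp only [Finset.mem_range] at hi; omega
      have h1 : ∑ t ∈ s.powerset, 2 * ((2*j).choose (2*i) : ℝ) * (ssum a s t)^(2*i) * (a k)^(2*(j-i))
          = 2 * ((2*j).choose (2*i) : ℝ) * (a k)^(2*(j-i)) * ∑ t ∈ s.powerset, (ssum a s t)^(2*i) := by
        rw [Finset.mul_sum]; exact Finset.sum_congr rfl fun t _ => by ring
      rw [h1]
      have hak : (0:ℝ) ≤ (a k)^(2*(j-i)) := by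
        rw [pow_mul]; exact pow_nonneg (sq_nonneg _) _
      have h2 : (2 : ℝ) * ((2*j).choose (2*i) : ℝ) * (a k)^(2*(j-i)) * ∑ t ∈ s.powerset, (ssum a s t)^(2*i)
          ≤ 2 * ((2*j).choose (2*i) : ℝ) * (a k)^(2*(j-i)) * (2^s.card * ((2*i)! : ℝ) * Q^i) := by
        apply mul_le_mul_of_nonneg_left (ih i)
        positivity
      refine h2.trans ?_
      have h3 : ((2*j).choose (2*i) : ℝ) * ((2*i)! : ℝ) ≤ ((2*j)! : ℝ) * (j.choose i : ℝ) := by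
        exact_mod_cast Nat.cast_le.2 (choose_factorial_le j i hij)
      have h4 : (a k)^(2*(j-i)) = (a k^2)^(j-i) := by rw [pow_mul]
      calc 2 * ((2*j).choose (2*i) : ℝ) * (a k)^(2*(j-i)) * (2^s.card * ((2*i)! : ℝ) * Q^i)
          = 2 * 2^s.card * ((a k)^(2*(j-i)) * Q^i) * (((2*j).choose (2*i) : ℝ) * ((2*i)! : ℝ)) := by
            ring
        _ ≤ 2 * 2^s.card * ((a k)^(2*(j-i)) * Q^i) * (((2*j)! : ℝ) * (j.choose i : ℝ)) := by
            apply mul_le_mul_of_nonneg_left h3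
            positivity
        _ = 2 * 2^s.card * ((2*j)! : ℝ) * (j.choose i : ℝ) * (a k^2)^(j-i) * Q^i := by
            rw [h4]; ring
    refine (Finset.sum_le_sum hbound).trans ?_
    have hrhs : ∑ i ∈ Finset.range (j+1),
        2 * 2^s.card * ((2*j)! : ℝ) * (j.choose i : ℝ) * (a k^2)^(j-i) * Q^i
          = 2 * 2^s.card * ((2*j)! : ℝ) * (Q + a k^2)^j := by
      rw [add_pow, Finset.mul_sum]
      exact Finset.sum_congr rfl fun i hi => by ring
    rw [hrhs]
    have : (2:ℝ)^(s.card + 1) = 2 * 2^s.card := by ring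
    rw [this]
    apply le_of_eq
    ring

lemma khintchine_pointwise (s : Finset ℕ) (a : ℕ → ℝ) {p : ℝ} (hp : 0 < p)
    {m : ℕ} (hm : 1 ≤ m) (hpm : p ≤ 2*m) :
    ∑ t ∈ s.powerset, |ssum a s t| ^ p
      ≤ 2^s.card * (((2*m)! : ℝ)) ^ (p / (2*(m:ℝ))) * (∑ n ∈ s, a n^2) ^ (p/2) := by
  have hQ : (0:ℝ) ≤ ∑ n ∈ s, a n^2 := Finset.sum_nonneg fun n _ => sq_nonneg _
  set Q : ℝ := ∑ n ∈ s, a n^2 with hQdef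
  have hmR : (0:ℝ) < 2*(m:ℝ) := by positivity
  have he : (1:ℝ) ≤ (2*(m:ℝ))/p := (one_le_div hp).2 hpm
  have hep : (2*(m:ℝ))/p > 0 := by positivity
  set c := s.card
  have hcard : (s.powerset.card : ℝ) = 2^c := by rw [Finset.card_powerset]; push_cast; rfl
  have hw' : ∑ _t ∈ s.powerset, ((2:ℝ)^c)⁻¹ = 1 := by
    rw [Finset.sum_const, nsmul_eq_mul, hcard]
    field_simp
  have key := Real.arith_mean_le_rpow_mean (s := s.powerset)
      (fun _ => ((2:ℝ)^c)⁻¹) (fun t => |ssum a s t| ^ p)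
      (fun t _ => by positivity) hw' (fun t _ => Real.rpow_nonneg (abs_nonneg _) _) he
  have hze : ∀ t ∈ s.powerset, (|ssum a s t| ^ p) ^ ((2*(m:ℝ))/p) = (ssum a s t)^(2*m) := by
    intro t _
    rw [← Real.rpow_mul (abs_nonneg _)]
    have hexp : p * (2*(m:ℝ)/p) = ((2*m : ℕ) : ℝ) := by
      push_cast; field_simp
    rw [hexp, Real.rpow_natCast, (even_two_mul m).pow_abs]
  have hpc : (0:ℝ) < 2^c := by positivity
  have hinv : (1:ℝ)/((2*(m:ℝ))/p) = p/(2*(m:ℝ)) := one_div_div _ _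
  have hmoment : ∑ t ∈ s.powerset, ((2:ℝ)^c)⁻¹ * (|ssum a s t| ^ p) ^ ((2*(m:ℝ))/p)
      ≤ ((2*m)! : ℝ) * Q^m := by
    rw [← Finset.mul_sum, Finset.sum_congr rfl hze]
    calc ((2:ℝ)^c)⁻¹ * ∑ t ∈ s.powerset, ssum a s t ^ (2*m)
        ≤ ((2:ℝ)^c)⁻¹ * (2^c * ((2*m)! : ℝ) * Q^m) := by
          apply mul_le_mul_of_nonneg_left (ssum_even_moment s a m)
          positivity
      _ = ((2*m)! : ℝ) * Q^m := by field_simp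
  have hmono := Real.rpow_le_rpow (by positivity) hmoment (by positivity : (0:ℝ) ≤ 1/((2*(m:ℝ))/p))
  have hfinal : (((2*m)! : ℝ) * Q^m) ^ ((1:ℝ)/((2*(m:ℝ))/p))
      = (((2*m)! : ℝ)) ^ (p / (2*(m:ℝ))) * Q ^ (p/2) := by
    rw [hinv, Real.mul_rpow (by positivity) (by positivity)]
    congr 1
    rw [← Real.rpow_natCast Q m, ← Real.rpow_mul hQ]
    congr 1
    have hm0 : (m:ℝ) ≠ 0 := by positivity
    field_simp
  have hchain : ∑ t ∈ s.powerset, ((2:ℝ)^c)⁻¹ * |ssum a s t| ^ p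
      ≤ (((2*m)! : ℝ)) ^ (p / (2*(m:ℝ))) * Q ^ (p/2) := by
    refine key.trans ?_
    rw [← hfinal]
    exact hmono
  calc ∑ t ∈ s.powerset, |ssum a s t| ^ p
      = 2^c * ∑ t ∈ s.powerset, ((2:ℝ)^c)⁻¹ * |ssum a s t| ^ p := by
        rw [← Finset.mul_sum, ← mul_assoc, mul_inv_cancel₀ hpc.ne', one_mul]
    _ ≤ 2^c * ((((2*m)! : ℝ)) ^ (p / (2*(m:ℝ))) * Q ^ (p/2)) := by
        apply mul_le_mul_of_nonneg_left hchain (by positivity)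
    _ = 2^c * (((2*m)! : ℝ)) ^ (p / (2*(m:ℝ))) * Q ^ (p/2) := by ring

/-! Measure-theoretic helpers. -/

lemma real_rpow_two (y : ℝ) : y ^ (2:ℝ) = y ^ 2 := by
  rw [show (2:ℝ) = ((2:ℕ):ℝ) by norm_num, Real.rpow_natCast]

lemma abs_rpow_two (y : ℝ) : |y| ^ (2:ℝ) = y ^ 2 := by
  rw [real_rpow_two, sq_abs]

lemma nnnorm_rpow_eq_ofReal (y : ℝ) {q : ℝ} (hq : 0 ≤ q) :
    (‖y‖₊ : ℝ≥0∞) ^ q = ENNReal.ofReal (|y| ^ q) := by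
  rw [← enorm_eq_nnnorm, Real.enorm_eq_ofReal_abs, ENNReal.ofReal_rpow_of_nonneg (abs_nonneg y) hq]

lemma eLpNorm_ofReal_eq {Ω : Type*} [MeasurableSpace Ω] {μ : Measure Ω} {q : ℝ}
    (hq : 0 < q) (g : Ω → ℝ) :
    eLpNorm g (ENNReal.ofReal q) μ = (∫⁻ x, ENNReal.ofReal (|g x| ^ q) ∂μ) ^ (1/q) := by
  rw [eLpNorm_eq_lintegral_rpow_enorm_toReal (ENNReal.ofReal_pos.2 hq).ne' ENNReal.ofReal_ne_top,
    ENNReal.toReal_ofReal hq.le]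
  congr 1
  exact lintegral_congr fun x => nnnorm_rpow_eq_ofReal (g x) hq.le

/-- Let `2 < p < ∞`, `1/r = 1/2 − 1/p`, and let `(f_n)` be a bounded unconditional
sequence in `L^p(μ)` and `h ∈ L^r(μ)` with `inf_n ‖f_n h‖_2 ≥ c > 0`.  Then `(f_n)` is
equivalent to the unit vector basis of `ℓ^2`. -/
theorem equiv_l2_basis_of_products_bounded_below
    {Ω : Type*} [MeasurableSpace Ω] (μ : Measure Ω) {p r : ℝ} (hp : 2 < p)
    (hr : 1 / r = 1 / 2 - 1 / p)
    (f : ℕ → Ω → ℝ) (h : Ω → ℝ)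
    (hf : ∀ n, MemLp (f n) (ENNReal.ofReal p) μ) (hh : MemLp h (ENNReal.ofReal r) μ)
    {M c C : ℝ} (hM : ∀ n, eLpNorm (f n) (ENNReal.ofReal p) μ ≤ ENNReal.ofReal M)
    (hc : 0 < c)
    (hlow : ∀ n, ENNReal.ofReal c ≤ eLpNorm (fun x => f n x * h x) 2 μ)
    (huncond : ∀ (s : Finset ℕ) (θ lam : ℕ → ℝ), (∀ n, θ n = 1 ∨ θ n = -1) →
      eLpNorm (fun x => ∑ n ∈ s, θ n * lam n * f n x) (ENNReal.ofReal p) μ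
        ≤ ENNReal.ofReal C *
            eLpNorm (fun x => ∑ n ∈ s, lam n * f n x) (ENNReal.ofReal p) μ) :
    ∃ A B : ℝ, 0 < A ∧ 0 < B ∧ ∀ (s : Finset ℕ) (lam : ℕ → ℝ),
      ENNReal.ofReal (A * (∑ n ∈ s, lam n ^ 2) ^ (1 / 2 : ℝ))
          ≤ eLpNorm (fun x => ∑ n ∈ s, lam n * f n x) (ENNReal.ofReal p) μ ∧
      eLpNorm (fun x => ∑ n ∈ s, lam n * f n x) (ENNReal.ofReal p) μ
          ≤ ENNReal.ofReal (B * (∑ n ∈ s, lam n ^ 2) ^ (1 / 2 : ℝ)) := by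
  have hp0 : (0:ℝ) < p := by linarith
  have hr0 : (0:ℝ) < r := by
    have h1 : (0:ℝ) < 1/r := by
      rw [hr]
      have h2 : 1/p < 1/2 := by
        rw [div_lt_div_iff₀ hp0 (by norm_num : (0:ℝ) < 2)]; linarith
      linarith
    exact one_div_pos.mp h1
  have hP0 : ENNReal.ofReal p ≠ 0 := (ENNReal.ofReal_pos.2 hp0).ne'
  have hPtop : ENNReal.ofReal p ≠ ∞ := ENNReal.ofReal_ne_top
  have hR0 : ENNReal.ofReal r ≠ 0 := (ENNReal.ofReal_pos.2 hr0).ne'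
  have hNeq : ∀ g : Ω → ℝ, eLpNorm g (ENNReal.ofReal p) μ
      = (∫⁻ x, ENNReal.ofReal (|g x| ^ p) ∂μ) ^ (1/p) := fun g => eLpNorm_ofReal_eq hp0 g
  have hinvp : ∀ X : ℝ≥0∞, (X ^ ((1:ℝ)/p)) ^ p = X := fun X => by
    rw [← ENNReal.rpow_mul, one_div_mul_cancel hp0.ne', ENNReal.rpow_one]
  have hNp : ∀ g : Ω → ℝ, (eLpNorm g (ENNReal.ofReal p) μ) ^ p
      = ∫⁻ x, ENNReal.ofReal (|g x| ^ p) ∂μ := fun g => by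
    rw [hNeq g]; exact hinvp _
  -- Hölder triple
  have hPR : (1:ℝ≥0∞)/2 = 1/(ENNReal.ofReal p) + 1/(ENNReal.ofReal r) := by
    have h2 : ((2:ℝ≥0∞)) = ENNReal.ofReal (2:ℝ) := by norm_num
    rw [h2, one_div, one_div, one_div, ← ENNReal.ofReal_inv_of_pos (by norm_num : (0:ℝ) < 2),
      ← ENNReal.ofReal_inv_of_pos hp0, ← ENNReal.ofReal_inv_of_pos hr0,
      ← ENNReal.ofReal_add (by positivity) (by positivity)]
    congr 1
    rw [one_div, one_div, one_div] at hr
    linarith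
  have hHolder : ∀ g : Ω → ℝ, AEStronglyMeasurable g μ →
      eLpNorm (fun x => g x * h x) 2 μ
        ≤ eLpNorm g (ENNReal.ofReal p) μ * eLpNorm h (ENNReal.ofReal r) μ := by
    intro g hg
    have heq : (fun x => g x * h x) = (g • h) := rfl
    rw [heq]
    haveI : ENNReal.HolderTriple (ENNReal.ofReal p) (ENNReal.ofReal r) 2 :=
      ⟨by simpa only [one_div] using hPR.symm⟩
    exact eLpNorm_smul_le_mul_eLpNorm hh.1 hg
  have hfm : ∀ n, AEStronglyMeasurable (f n) μ := fun n => (hf n).1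
  have hcne : ENNReal.ofReal c ≠ 0 := (ENNReal.ofReal_pos.2 hc).ne'
  have hhne : eLpNorm h (ENNReal.ofReal r) μ ≠ 0 := by
    intro h0
    have hz : h =ᵐ[μ] 0 := (eLpNorm_eq_zero_iff hh.1 hR0).mp h0
    have h1 : (fun x => f 0 x * h x) =ᵐ[μ] (0 : Ω → ℝ) := by
      filter_upwards [hz] with x hx
      simp only [Pi.zero_apply] at hx ⊢
      rw [hx, mul_zero]
    have h2 := hlow 0
    rw [eLpNorm_congr_ae h1, eLpNorm_zero] at h2
    exact hcne (le_antisymm h2 zero_le)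
  have hHtop : eLpNorm h (ENNReal.ofReal r) μ ≠ ∞ := hh.2.ne
  set Hr := (eLpNorm h (ENNReal.ofReal r) μ).toReal with hHrdef
  have hHr0 : 0 < Hr := ENNReal.toReal_pos hhne hHtop
  have hHr : eLpNorm h (ENNReal.ofReal r) μ = ENNReal.ofReal Hr :=
    (ENNReal.ofReal_toReal hHtop).symm
  have hNf0 : eLpNorm (f 0) (ENNReal.ofReal p) μ ≠ 0 := by
    intro h0
    have h1 := (hlow 0).trans (hHolder (f 0) (hfm 0))
    rw [h0, zero_mul] at h1
    exact hcne (le_antisymm h1 zero_le)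
  have hNf0top : eLpNorm (f 0) (ENNReal.ofReal p) μ ≠ ∞ := (hf 0).2.ne
  have hC1 : (1:ℝ) ≤ C := by
    have hu := huncond {0} (fun _ => 1) (fun _ => 1) (fun _ => Or.inl rfl)
    simp only [Finset.sum_singleton, one_mul] at hu
    have h1 : 1 * eLpNorm (f 0) (ENNReal.ofReal p) μ
        ≤ ENNReal.ofReal C * eLpNorm (f 0) (ENNReal.ofReal p) μ := by
      rw [one_mul]; exact hu
    exact ENNReal.one_le_ofReal.mp ((ENNReal.mul_le_mul_iff_left hNf0 hNf0top).mp h1)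
  have hC0 : (0:ℝ) < C := by linarith
  have hM0 : (0:ℝ) < M := by
    have h1 : (0:ℝ≥0∞) < eLpNorm (f 0) (ENNReal.ofReal p) μ := pos_iff_ne_zero.mpr hNf0
    exact ENNReal.ofReal_pos.mp (h1.trans_le (hM 0))
  -- choice of even moment
  set m : ℕ := ⌈p⌉₊ with hmdef
  have hm1 : 1 ≤ m := Nat.one_le_ceil_iff.2 hp0
  have hmp : p ≤ 2*(m:ℝ) := by
    have h1 := Nat.le_ceil p
    have h2 : (0:ℝ) ≤ (m:ℝ) := Nat.cast_nonneg m
    rw [← hmdef] at h1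
    linarith
  set K : ℝ := ((2*m)! : ℝ) ^ (p/(2*(m:ℝ))) with hKdef
  have hK0 : 0 < K := Real.rpow_pos_of_pos (by exact_mod_cast (2*m).factorial_pos) _
  refine ⟨c / (C * Hr), C * K ^ ((1:ℝ)/p) * M,
    div_pos hc (mul_pos hC0 hHr0),
    mul_pos (mul_pos hC0 (Real.rpow_pos_of_pos hK0 _)) hM0,
    fun s lam => ?_⟩
  set Sig2 : ℝ := ∑ n ∈ s, lam n ^ 2 with hSigdef
  have hSig0 : 0 ≤ Sig2 := Finset.sum_nonneg fun n _ => sq_nonneg _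
  set θ : Finset ℕ → ℕ → ℝ := fun t n => if n ∈ t then 1 else -1 with hθdef
  have hθpm : ∀ t n, θ t n = 1 ∨ θ t n = -1 := fun t n => by
    by_cases hn : n ∈ t
    · left; simp [hθdef, hn]
    · right; simp [hθdef, hn]
  have hpow0 : ((2:ℝ≥0∞)^s.card) ≠ 0 := pow_ne_zero _ (by norm_num)
  have hpowtop : ((2:ℝ≥0∞)^s.card) ≠ ∞ := ENNReal.pow_ne_top ENNReal.ofNat_ne_top
  have hcast2 : ((2^s.card : ℕ) : ℝ≥0∞) = (2:ℝ≥0∞)^s.card := by push_cast; rfl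
  constructor
  · -- LOWER BOUND
    have hJ : ∀ n : ℕ, ENNReal.ofReal (c^2)
        ≤ ∫⁻ x, ENNReal.ofReal ((f n x * h x)^2) ∂μ := by
      intro n
      have h1 := hlow n
      have h2 : eLpNorm (fun x => f n x * h x) 2 μ
          = (∫⁻ x, ENNReal.ofReal ((f n x * h x)^2) ∂μ) ^ ((1:ℝ)/2) := by
        rw [show (2:ℝ≥0∞) = ENNReal.ofReal (2:ℝ) by norm_num, eLpNorm_ofReal_eq two_pos]
        congr 1
        exact lintegral_congr fun x => by rw [abs_rpow_two]
      rw [h2] at h1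
      have h3 := ENNReal.rpow_le_rpow h1 (by norm_num : (0:ℝ) ≤ 2)
      rw [← ENNReal.rpow_mul, one_div, inv_mul_cancel₀ (by norm_num : (2:ℝ) ≠ 0),
        ENNReal.rpow_one, ENNReal.ofReal_rpow_of_nonneg hc.le (by norm_num : (0:ℝ) ≤ 2),
        real_rpow_two] at h3
      exact h3
    have hSθmem : ∀ t : Finset ℕ,
        MemLp (fun x => ∑ n ∈ s, θ t n * lam n * f n x) (ENNReal.ofReal p) μ :=
      fun t => memLp_finset_sum s (fun n _ => (hf n).const_mul (θ t n * lam n))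
    set I : Finset ℕ → ℝ≥0∞ := fun t =>
      ∫⁻ x, ENNReal.ofReal (((∑ n ∈ s, θ t n * lam n * f n x) * h x)^2) ∂μ with hIdef
    have hImeas : ∀ t, AEMeasurable
        (fun x => ENNReal.ofReal (((∑ n ∈ s, θ t n * lam n * f n x) * h x)^2)) μ := fun t =>
      ((((hSθmem t).1.mul hh.1).aemeasurable).pow_const 2).ennreal_ofReal
    have hIint : ∑ t ∈ s.powerset, I t
        = (2:ℝ≥0∞)^s.card * ∑ n ∈ s, ENNReal.ofReal (lam n^2)
            * (∫⁻ x, ENNReal.ofReal ((f n x * h x)^2) ∂μ) := by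
      rw [hIdef, ← lintegral_finset_sum' _ (fun t _ => hImeas t)]
      have e2 : ∀ x, ∑ t ∈ s.powerset,
          ENNReal.ofReal (((∑ n ∈ s, θ t n * lam n * f n x) * h x)^2)
            = (2:ℝ≥0∞)^s.card * ∑ n ∈ s, ENNReal.ofReal (lam n^2)
                * ENNReal.ofReal ((f n x * h x)^2) := by
        intro x
        rw [← ENNReal.ofReal_sum_of_nonneg (fun t _ => sq_nonneg _)]
        have e3 : ∑ t ∈ s.powerset, ((∑ n ∈ s, θ t n * lam n * f n x) * h x)^2
            = ∑ t ∈ s.powerset, (ssum (fun n => lam n * (f n x * h x)) s t)^2 := by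
          refine Finset.sum_congr rfl fun t _ => ?_
          congr 1
          rw [ssum, Finset.sum_mul]
          refine Finset.sum_congr rfl fun n _ => ?_
          rw [hθdef]
          ring
        rw [e3, ssum_sq_identity]
        have e4 : ∑ n ∈ s, (lam n * (f n x * h x))^2
            = ∑ n ∈ s, lam n^2 * (f n x * h x)^2 :=
          Finset.sum_congr rfl fun n _ => by ring
        rw [e4, ENNReal.ofReal_mul (by positivity),
          ENNReal.ofReal_pow (by norm_num : (0:ℝ) ≤ 2), ENNReal.ofReal_ofNat,
          ENNReal.ofReal_sum_of_nonneg (fun n _ => by positivity)]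
        congr 1
        exact Finset.sum_congr rfl fun n _ => ENNReal.ofReal_mul (sq_nonneg _)
      rw [lintegral_congr e2, lintegral_const_mul' _ _ hpowtop]
      congr 1
      have hmeas2 : ∀ n ∈ s, AEMeasurable
          (fun x => ENNReal.ofReal (lam n^2) * ENNReal.ofReal ((f n x * h x)^2)) μ := by
        intro n _
        exact (((((hfm n).mul hh.1).aemeasurable).pow_const 2).ennreal_ofReal).const_mul _
      rw [lintegral_finset_sum' s hmeas2]
      exact Finset.sum_congr rfl fun n _ => lintegral_const_mul' _ _ ENNReal.ofReal_ne_top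
    have hexists : ∃ t₀ ∈ s.powerset, ENNReal.ofReal (c^2) * ENNReal.ofReal Sig2 ≤ I t₀ := by
      obtain ⟨t₀, ht₀, hmax⟩ := Finset.exists_max_image s.powerset I
        ⟨∅, Finset.empty_mem_powerset s⟩
      refine ⟨t₀, ht₀, ?_⟩
      have hsum_le : ∑ t ∈ s.powerset, I t ≤ s.powerset.card • I t₀ :=
        Finset.sum_le_card_nsmul _ _ _ (fun t ht => hmax t ht)
      rw [Finset.card_powerset, nsmul_eq_mul, hcast2] at hsum_le
      have hlb : (2:ℝ≥0∞)^s.card * (ENNReal.ofReal (c^2) * ENNReal.ofReal Sig2)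
          ≤ ∑ t ∈ s.powerset, I t := by
        rw [hIint]
        refine mul_le_mul_right ?_ _
        have e5 : ENNReal.ofReal (c^2) * ENNReal.ofReal Sig2
            = ∑ n ∈ s, ENNReal.ofReal (lam n^2) * ENNReal.ofReal (c^2) := by
          rw [← Finset.sum_mul, ← ENNReal.ofReal_sum_of_nonneg (fun n _ => sq_nonneg _),
            mul_comm, hSigdef]
        rw [e5]
        exact Finset.sum_le_sum fun n _ => mul_le_mul_right (hJ n) _
      exact (ENNReal.mul_le_mul_iff_right hpow0 hpowtop).mp (hlb.trans hsum_le)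
    obtain ⟨t₀, _, hI0⟩ := hexists
    have hstep1 : ENNReal.ofReal (c * Sig2 ^ ((1:ℝ)/2))
        ≤ eLpNorm (fun x => (∑ n ∈ s, θ t₀ n * lam n * f n x) * h x) 2 μ := by
      have heL : eLpNorm (fun x => (∑ n ∈ s, θ t₀ n * lam n * f n x) * h x) 2 μ
          = (I t₀) ^ ((1:ℝ)/2) := by
        rw [show (2:ℝ≥0∞) = ENNReal.ofReal (2:ℝ) by norm_num, eLpNorm_ofReal_eq two_pos,
          hIdef]
        congr 1
        exact lintegral_congr fun x => by rw [abs_rpow_two]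
      rw [heL]
      have h1 : ENNReal.ofReal (c^2 * Sig2) ≤ I t₀ := by
        rw [ENNReal.ofReal_mul (sq_nonneg c)]; exact hI0
      have h2 := ENNReal.rpow_le_rpow h1 (by norm_num : (0:ℝ) ≤ 1/2)
      refine le_trans (le_of_eq ?_) h2
      rw [ENNReal.ofReal_rpow_of_nonneg (by positivity) (by norm_num : (0:ℝ) ≤ 1/2)]
      congr 1
      rw [Real.mul_rpow (sq_nonneg c) hSig0]
      congr 1
      rw [← Real.rpow_natCast c 2, ← Real.rpow_mul hc.le]
      have e6 : ((2:ℕ):ℝ) * ((1:ℝ)/2) = 1 := by push_cast; ring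
      rw [e6, Real.rpow_one]
    have hstep2 := hstep1.trans (hHolder _ (hSθmem t₀).1)
    have hstep3 := huncond s (θ t₀) lam (hθpm t₀)
    have hstep4 : ENNReal.ofReal (c * Sig2 ^ ((1:ℝ)/2))
        ≤ eLpNorm (fun x => ∑ n ∈ s, lam n * f n x) (ENNReal.ofReal p) μ
            * ENNReal.ofReal (C * Hr) := by
      refine hstep2.trans ?_
      rw [hHr]
      calc eLpNorm (fun x => ∑ n ∈ s, θ t₀ n * lam n * f n x) (ENNReal.ofReal p) μ
            * ENNReal.ofReal Hr
          ≤ (ENNReal.ofReal C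
              * eLpNorm (fun x => ∑ n ∈ s, lam n * f n x) (ENNReal.ofReal p) μ)
            * ENNReal.ofReal Hr := mul_le_mul_left hstep3 _
        _ = eLpNorm (fun x => ∑ n ∈ s, lam n * f n x) (ENNReal.ofReal p) μ
              * ENNReal.ofReal (C * Hr) := by
            rw [ENNReal.ofReal_mul hC0.le]; ring
    have hne : ENNReal.ofReal (C*Hr) ≠ 0 := (ENNReal.ofReal_pos.2 (by positivity)).ne'
    refine (ENNReal.mul_le_mul_iff_left hne ENNReal.ofReal_ne_top).mp ?_
    calc ENNReal.ofReal (c/(C*Hr) * Sig2 ^ ((1:ℝ)/2)) * ENNReal.ofReal (C*Hr)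
        = ENNReal.ofReal (c * Sig2 ^ ((1:ℝ)/2)) := by
          rw [← ENNReal.ofReal_mul (by positivity)]
          congr 1
          field_simp
      _ ≤ _ := hstep4
  · -- UPPER BOUND
    have hq2 : (0:ℝ) < p/2 := by linarith
    have hSθ'mem : ∀ t : Finset ℕ,
        MemLp (fun x => ∑ n ∈ s, (θ t n * lam n) * f n x) (ENNReal.ofReal p) μ :=
      fun t => memLp_finset_sum s (fun n _ => (hf n).const_mul (θ t n * lam n))
    have hstepA : ∀ t : Finset ℕ,
        eLpNorm (fun x => ∑ n ∈ s, lam n * f n x) (ENNReal.ofReal p) μ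
          ≤ ENNReal.ofReal C
              * eLpNorm (fun x => ∑ n ∈ s, (θ t n * lam n) * f n x) (ENNReal.ofReal p) μ := by
      intro t
      have hu := huncond s (θ t) (fun n => θ t n * lam n) (hθpm t)
      have hfun : (fun x => ∑ n ∈ s, θ t n * (θ t n * lam n) * f n x)
          = fun x => ∑ n ∈ s, lam n * f n x := by
        funext x
        refine Finset.sum_congr rfl fun n _ => ?_
        rcases hθpm t n with h1 | h1 <;> rw [h1] <;> ring
      calc eLpNorm (fun x => ∑ n ∈ s, lam n * f n x) (ENNReal.ofReal p) μ
          = eLpNorm (fun x => ∑ n ∈ s, θ t n * (θ t n * lam n) * f n x)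
              (ENNReal.ofReal p) μ := by rw [hfun]
        _ ≤ _ := hu
    have hstepA' : ∀ t : Finset ℕ,
        (eLpNorm (fun x => ∑ n ∈ s, lam n * f n x) (ENNReal.ofReal p) μ) ^ p
          ≤ (ENNReal.ofReal C)^p
              * ∫⁻ x, ENNReal.ofReal (|∑ n ∈ s, (θ t n * lam n) * f n x| ^ p) ∂μ := by
      intro t
      have h1 := ENNReal.rpow_le_rpow (hstepA t) hp0.le
      rw [ENNReal.mul_rpow_of_nonneg _ _ hp0.le,
        hNp (fun x => ∑ n ∈ s, θ t n * lam n * f n x)] at h1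
      exact h1
    have hmeasθ' : ∀ t, AEMeasurable
        (fun x => ENNReal.ofReal (|∑ n ∈ s, (θ t n * lam n) * f n x| ^ p)) μ := by
      intro t
      have h1 : (fun x => ENNReal.ofReal (|∑ n ∈ s, (θ t n * lam n) * f n x| ^ p))
          = fun x => (‖∑ n ∈ s, (θ t n * lam n) * f n x‖₊ : ℝ≥0∞) ^ p := by
        funext x; rw [nnnorm_rpow_eq_ofReal _ hp0.le]
      rw [h1]
      exact (hSθ'mem t).1.enorm.pow_const p
    have hsum_t : ((2:ℝ≥0∞)^s.card)
        * (eLpNorm (fun x => ∑ n ∈ s, lam n * f n x) (ENNReal.ofReal p) μ)^p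
          ≤ (ENNReal.ofReal C)^p * ∑ t ∈ s.powerset,
              ∫⁻ x, ENNReal.ofReal (|∑ n ∈ s, (θ t n * lam n) * f n x| ^ p) ∂μ := by
      calc ((2:ℝ≥0∞)^s.card)
          * (eLpNorm (fun x => ∑ n ∈ s, lam n * f n x) (ENNReal.ofReal p) μ)^p
          = ∑ _t ∈ s.powerset,
              (eLpNorm (fun x => ∑ n ∈ s, lam n * f n x) (ENNReal.ofReal p) μ)^p := by
            rw [Finset.sum_const, Finset.card_powerset, nsmul_eq_mul, hcast2]
        _ ≤ ∑ t ∈ s.powerset, (ENNReal.ofReal C)^p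
              * ∫⁻ x, ENNReal.ofReal (|∑ n ∈ s, (θ t n * lam n) * f n x| ^ p) ∂μ :=
            Finset.sum_le_sum fun t _ => hstepA' t
        _ = _ := by rw [Finset.mul_sum]
    have hKh : ∑ t ∈ s.powerset,
        ∫⁻ x, ENNReal.ofReal (|∑ n ∈ s, (θ t n * lam n) * f n x| ^ p) ∂μ
          ≤ ENNReal.ofReal (2^s.card * K)
              * ∫⁻ x, ENNReal.ofReal ((∑ n ∈ s, (lam n * f n x)^2) ^ (p/2)) ∂μ := by
      rw [← lintegral_finset_sum' _ (fun t _ => hmeasθ' t),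
        ← lintegral_const_mul' _ _ ENNReal.ofReal_ne_top]
      refine lintegral_mono fun x => ?_
      rw [← ENNReal.ofReal_sum_of_nonneg (fun t _ => Real.rpow_nonneg (abs_nonneg _) _),
        ← ENNReal.ofReal_mul (by positivity)]
      apply ENNReal.ofReal_le_ofReal
      have hk := khintchine_pointwise s (fun n => lam n * f n x) hp0 hm1 hmp
      have e7 : ∑ t ∈ s.powerset, |∑ n ∈ s, (θ t n * lam n) * f n x| ^ p
          = ∑ t ∈ s.powerset, |ssum (fun n => lam n * f n x) s t| ^ p := by
        refine Finset.sum_congr rfl fun t _ => ?_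
        congr 2
        rw [ssum]
        refine Finset.sum_congr rfl fun n _ => ?_
        rw [hθdef]
        ring
      rw [e7, hKdef]
      calc ∑ t ∈ s.powerset, |ssum (fun n => lam n * f n x) s t| ^ p
          ≤ 2^s.card * (((2*m)! : ℝ)) ^ (p / (2*(m:ℝ)))
              * (∑ n ∈ s, (lam n * f n x)^2) ^ (p/2) := hk
        _ = 2^s.card * ((2*m)! : ℝ) ^ (p/(2*(m:ℝ)))
              * (∑ n ∈ s, (lam n * f n x)^2) ^ (p/2) := by ring
    have hP21 : (1:ℝ≥0∞) ≤ ENNReal.ofReal (p/2) := ENNReal.one_le_ofReal.2 (by linarith)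
    have hQF : ∫⁻ x, ENNReal.ofReal ((∑ n ∈ s, (lam n * f n x)^2) ^ (p/2)) ∂μ
        ≤ ENNReal.ofReal ((M^2 * Sig2) ^ (p/2)) := by
      have hQFnn : ∀ x, (0:ℝ) ≤ ∑ n ∈ s, (lam n * f n x)^2 :=
        fun x => Finset.sum_nonneg fun n _ => sq_nonneg _
      have hLeq : eLpNorm (fun x => ∑ n ∈ s, (lam n * f n x)^2) (ENNReal.ofReal (p/2)) μ
          = (∫⁻ x, ENNReal.ofReal ((∑ n ∈ s, (lam n * f n x)^2) ^ (p/2)) ∂μ) ^ (1/(p/2)) := by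
        rw [eLpNorm_ofReal_eq hq2]
        congr 1
        exact lintegral_congr fun x => by rw [abs_of_nonneg (hQFnn x)]
      have hLinv : ∫⁻ x, ENNReal.ofReal ((∑ n ∈ s, (lam n * f n x)^2) ^ (p/2)) ∂μ
          = (eLpNorm (fun x => ∑ n ∈ s, (lam n * f n x)^2) (ENNReal.ofReal (p/2)) μ) ^ (p/2) := by
        rw [hLeq, ← ENNReal.rpow_mul, one_div_mul_cancel hq2.ne', ENNReal.rpow_one]
      rw [hLinv]
      have hterm : ∀ n : ℕ,
          eLpNorm (fun x => (lam n * f n x)^2) (ENNReal.ofReal (p/2)) μ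
            ≤ ENNReal.ofReal (lam n^2 * M^2) := by
        intro n
        have e1 : (fun x => (lam n * f n x)^2)
            = fun x => ‖(lam n • f n) x‖ ^ (2:ℝ) := by
          funext x
          rw [Pi.smul_apply, smul_eq_mul, Real.norm_eq_abs, abs_rpow_two]
        rw [e1, eLpNorm_norm_rpow _ (by norm_num : (0:ℝ) < 2)]
        have e2 : ENNReal.ofReal (p/2) * ENNReal.ofReal (2:ℝ) = ENNReal.ofReal p := by
          rw [← ENNReal.ofReal_mul (by positivity)]
          congr 1
          field_simp
        rw [e2, eLpNorm_const_smul]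
        calc ((‖lam n‖₊ : ℝ≥0∞) * eLpNorm (f n) (ENNReal.ofReal p) μ) ^ (2:ℝ)
            ≤ ((‖lam n‖₊ : ℝ≥0∞) * ENNReal.ofReal M) ^ (2:ℝ) :=
              ENNReal.rpow_le_rpow (mul_le_mul_right (hM n) _) (by norm_num)
          _ = ENNReal.ofReal (lam n^2 * M^2) := by
              rw [ENNReal.mul_rpow_of_nonneg _ _ (by norm_num : (0:ℝ) ≤ 2),
                ← enorm_eq_nnnorm, Real.enorm_eq_ofReal_abs,
                ENNReal.ofReal_rpow_of_nonneg (abs_nonneg _) (by norm_num : (0:ℝ) ≤ 2),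
                ENNReal.ofReal_rpow_of_nonneg hM0.le (by norm_num : (0:ℝ) ≤ 2),
                ← ENNReal.ofReal_mul (by positivity), abs_rpow_two, real_rpow_two]
      have hsum : eLpNorm (fun x => ∑ n ∈ s, (lam n * f n x)^2) (ENNReal.ofReal (p/2)) μ
          ≤ ENNReal.ofReal (M^2 * Sig2) := by
        calc eLpNorm (fun x => ∑ n ∈ s, (lam n * f n x)^2) (ENNReal.ofReal (p/2)) μ
            = eLpNorm (∑ n ∈ s, fun x => (lam n * f n x)^2) (ENNReal.ofReal (p/2)) μ := by
              congr 1
              funext x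
              rw [Finset.sum_apply]
          _ ≤ ∑ n ∈ s, eLpNorm (fun x => (lam n * f n x)^2) (ENNReal.ofReal (p/2)) μ :=
              eLpNorm_sum_le (fun n _ =>
                ((((hfm n).const_mul (lam n)).aemeasurable.pow_const 2).aestronglyMeasurable))
                hP21
          _ ≤ ∑ n ∈ s, ENNReal.ofReal (lam n^2 * M^2) :=
              Finset.sum_le_sum fun n _ => hterm n
          _ = ENNReal.ofReal (M^2 * Sig2) := by
              rw [← ENNReal.ofReal_sum_of_nonneg (fun n _ => by positivity)]
              congr 1
              rw [← Finset.sum_mul, hSigdef]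
              ring
      refine le_trans (ENNReal.rpow_le_rpow hsum (by positivity : (0:ℝ) ≤ p/2)) ?_
      rw [ENNReal.ofReal_rpow_of_nonneg (by positivity) (by positivity)]
    have hcomb : ((2:ℝ≥0∞)^s.card)
        * (eLpNorm (fun x => ∑ n ∈ s, lam n * f n x) (ENNReal.ofReal p) μ)^p
          ≤ ((2:ℝ≥0∞)^s.card) * ((ENNReal.ofReal C)^p * ENNReal.ofReal K
              * ENNReal.ofReal ((M^2*Sig2)^(p/2))) := by
      refine hsum_t.trans ?_
      calc (ENNReal.ofReal C)^p * ∑ t ∈ s.powerset,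
              ∫⁻ x, ENNReal.ofReal (|∑ n ∈ s, (θ t n * lam n) * f n x| ^ p) ∂μ
          ≤ (ENNReal.ofReal C)^p * (ENNReal.ofReal (2^s.card * K)
              * ENNReal.ofReal ((M^2*Sig2)^(p/2))) :=
            mul_le_mul_right (hKh.trans (mul_le_mul_right hQF _)) _
        _ = ((2:ℝ≥0∞)^s.card) * ((ENNReal.ofReal C)^p * ENNReal.ofReal K
              * ENNReal.ofReal ((M^2*Sig2)^(p/2))) := by
            rw [ENNReal.ofReal_mul (by positivity : (0:ℝ) ≤ 2^s.card),
              ENNReal.ofReal_pow (by norm_num : (0:ℝ) ≤ 2), ENNReal.ofReal_ofNat]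
            ring
    have hNp_le := (ENNReal.mul_le_mul_iff_right hpow0 hpowtop).mp hcomb
    have hfinal : (ENNReal.ofReal C)^p * ENNReal.ofReal K
        * ENNReal.ofReal ((M^2*Sig2)^(p/2))
          = ENNReal.ofReal ((C * K^((1:ℝ)/p) * M * Sig2^((1:ℝ)/2))^p) := by
      rw [ENNReal.ofReal_rpow_of_nonneg hC0.le hp0.le,
        ← ENNReal.ofReal_mul (by positivity), ← ENNReal.ofReal_mul (by positivity)]
      congr 1
      have eK : (K^((1:ℝ)/p))^p = K := by
        rw [← Real.rpow_mul hK0.le, one_div_mul_cancel hp0.ne', Real.rpow_one]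
      have eM : ((M^2 : ℝ))^(p/2) = M^p := by
        rw [← Real.rpow_natCast M 2, ← Real.rpow_mul hM0.le]
        congr 1
        push_cast
        ring
      have eSig : (Sig2^((1:ℝ)/2))^p = Sig2^(p/2) := by
        rw [← Real.rpow_mul hSig0]
        congr 1
        ring
      rw [Real.mul_rpow (by positivity) (Real.rpow_nonneg hSig0 _),
        Real.mul_rpow (by positivity) hM0.le,
        Real.mul_rpow hC0.le (Real.rpow_nonneg hK0.le _),
        Real.mul_rpow (by positivity) hSig0, eK, eM, eSig]
      ring
    rw [hfinal] at hNp_le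
    have hlast := ENNReal.rpow_le_rpow hNp_le (by positivity : (0:ℝ) ≤ 1/p)
    rw [← ENNReal.rpow_mul, mul_one_div_cancel hp0.ne', ENNReal.rpow_one,
      ENNReal.ofReal_rpow_of_nonneg (by positivity) (by positivity),
      ← Real.rpow_mul (by positivity), mul_one_div_cancel hp0.ne', Real.rpow_one] at hlast
    exact hlast
end

section
/- Let (ε_n) be a sequence of positive reals with ∑_n ε_n/(1−ε_n) = ε < 1, and let (E_n) be a sequence of finite-dimensional subspaces of L^p(μ) (1 ≤ p < ∞). Suppose there are measurable sets (A_n), pairwise disjoint, such that for every n and every y ∈ E_n, ‖y − 1_{A_n}·y‖_p ≤ ε_n‖y‖_p. Then for every finitely supported choice of y_n ∈ E_n: (1−ε)^2 (∑_n ‖y_n‖_p^p)^{1/p} ≤ ‖∑_n y_n‖_p ≤ (1+ε)(∑_n ‖y_n‖_p^p)^{1/p}. -/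
open MeasureTheory
open scoped ENNReal

section Aux

variable {Ω : Type*} [MeasurableSpace Ω] {μ : Measure Ω}

/-- Coercion of a finite sum in `Lp` agrees a.e. with the pointwise sum. -/
lemma Lp_coeFn_finset_sum {q : ℝ≥0∞} (s : Finset ℕ) (z : ℕ → Lp ℝ q μ) :
    ((∑ n ∈ s, z n : Lp ℝ q μ) : Ω → ℝ) =ᵐ[μ] fun ω => ∑ n ∈ s, (z n : Ω → ℝ) ω := by
  classical
  induction s using Finset.cons_induction with
  | empty => simpa [Pi.zero_def] using Lp.coeFn_zero ℝ q μ
  | cons a s ha ih =>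
      simp only [Finset.sum_cons]
      filter_upwards [Lp.coeFn_add (z a) (∑ n ∈ s, z n), ih] with ω h1 h2
      simp only [Pi.add_apply] at h1
      rw [h1, h2]

/-- `‖f‖ ^ p` as a lintegral, for `f : Lp`. -/
lemma Lp_norm_rpow_eq {p : ℝ} (hp : 0 < p) (f : Lp ℝ (ENNReal.ofReal p) μ) :
    ‖f‖ ^ p = (∫⁻ ω, (‖(f : Ω → ℝ) ω‖₊ : ℝ≥0∞) ^ p ∂μ).toReal := by
  have hq0 : (ENNReal.ofReal p) ≠ 0 := by
    simp [ENNReal.ofReal_eq_zero, not_le, hp]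
  have hqt : (ENNReal.ofReal p) ≠ ∞ := ENNReal.ofReal_ne_top
  have htR : (ENNReal.ofReal p).toReal = p := ENNReal.toReal_ofReal hp.le
  simp only [← enorm_eq_nnnorm]
  rw [Lp.norm_def, eLpNorm_eq_lintegral_rpow_enorm_toReal hq0 hqt, htR,
    ← ENNReal.toReal_rpow, ← Real.rpow_mul ENNReal.toReal_nonneg, one_div,
    inv_mul_cancel₀ hp.ne', Real.rpow_one]

/-- The lintegral `∫⁻ ‖f‖₊ ^ p` of an `Lp` function is finite. -/
lemma Lp_lintegral_rpow_lt_top {p : ℝ} (hp : 0 < p) (f : Lp ℝ (ENNReal.ofReal p) μ) :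
    (∫⁻ ω, (‖(f : Ω → ℝ) ω‖₊ : ℝ≥0∞) ^ p ∂μ) < ∞ := by
  have hq0 : (ENNReal.ofReal p) ≠ 0 := by
    simp [ENNReal.ofReal_eq_zero, not_le, hp]
  have hqt : (ENNReal.ofReal p) ≠ ∞ := ENNReal.ofReal_ne_top
  have := lintegral_rpow_enorm_lt_top_of_eLpNorm_lt_top hq0 hqt (Lp.eLpNorm_lt_top f)
  rwa [ENNReal.toReal_ofReal hp.le] at this

/-- Key disjointness identity: if each `z n` is a.e. supported in `A n` and the `A n`
are pairwise disjoint, then `‖∑ z n‖ ^ p = ∑ ‖z n‖ ^ p`. -/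
lemma norm_sum_rpow_of_disjoint {p : ℝ} (hp : 0 < p)
    (A : ℕ → Set Ω) (hdisj : Pairwise (Function.onFun Disjoint A))
    (s : Finset ℕ) (z : ℕ → Lp ℝ (ENNReal.ofReal p) μ)
    (hz : ∀ n ∈ s, (z n : Ω → ℝ) =ᵐ[μ] (A n).indicator (z n : Ω → ℝ)) :
    ‖∑ n ∈ s, z n‖ ^ p = ∑ n ∈ s, ‖z n‖ ^ p := by
  classical
  have hall : ∀ᵐ ω ∂μ, ∀ n ∈ s, (z n : Ω → ℝ) ω = (A n).indicator (z n : Ω → ℝ) ω :=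
    (ae_ball_iff s.countable_toSet).2 hz
  -- pointwise identity
  have hpt : ∀ᵐ ω ∂μ, (‖∑ n ∈ s, (z n : Ω → ℝ) ω‖₊ : ℝ≥0∞) ^ p
      = ∑ n ∈ s, (‖(z n : Ω → ℝ) ω‖₊ : ℝ≥0∞) ^ p := by
    filter_upwards [hall] with ω hω
    by_cases hex : ∃ k ∈ s, ω ∈ A k
    · obtain ⟨k, hk, hωk⟩ := hex
      have hzero : ∀ n ∈ s, n ≠ k → (z n : Ω → ℝ) ω = 0 := by
        intro n hn hnk
        rw [hω n hn, Set.indicator_of_notMem]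
        intro hωn
        exact (hdisj hnk).le_bot ⟨hωn, hωk⟩
      rw [Finset.sum_eq_single k (fun n hn hnk => hzero n hn hnk) (fun h => absurd hk h),
        Finset.sum_eq_single k (fun n hn hnk => by
          rw [hzero n hn hnk]; simp [ENNReal.zero_rpow_of_pos hp])
          (fun h => absurd hk h)]
    · push_neg at hex
      have hzero : ∀ n ∈ s, (z n : Ω → ℝ) ω = 0 := by
        intro n hn
        rw [hω n hn, Set.indicator_of_notMem (hex n hn)]
      rw [Finset.sum_eq_zero hzero, Finset.sum_eq_zero (fun n hn => by
        rw [hzero n hn]; simp [ENNReal.zero_rpow_of_pos hp])]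
      simp [ENNReal.zero_rpow_of_pos hp]
  -- lintegral identity
  have hmeas : ∀ n ∈ s, AEMeasurable (fun ω => (‖(z n : Ω → ℝ) ω‖₊ : ℝ≥0∞) ^ p) μ :=
    fun n _ => (Lp.aestronglyMeasurable (z n)).enorm.pow_const p
  have hlint : (∫⁻ ω, (‖((∑ n ∈ s, z n : Lp ℝ (ENNReal.ofReal p) μ) : Ω → ℝ) ω‖₊ : ℝ≥0∞) ^ p ∂μ)
      = ∑ n ∈ s, ∫⁻ ω, (‖(z n : Ω → ℝ) ω‖₊ : ℝ≥0∞) ^ p ∂μ := by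
    rw [← lintegral_finset_sum' s hmeas]
    refine lintegral_congr_ae ?_
    filter_upwards [hpt, Lp_coeFn_finset_sum s z] with ω h1 h2
    rw [h2, h1]
  rw [Lp_norm_rpow_eq hp, hlint, ENNReal.toReal_sum
    (fun n _ => (Lp_lintegral_rpow_lt_top hp (z n)).ne)]
  exact Finset.sum_congr rfl fun n _ => (Lp_norm_rpow_eq hp (z n)).symm

end Aux

set_option maxHeartbeats 1000000 in
/-- Almost disjointness perturbation estimate in `L^p(μ)`, `1 ≤ p < ∞`.  Let `(ε_n)` be
positive reals with `ε_n < 1` and `∑ ε_n/(1−ε_n) = ε < 1`, and `(E_n)` finite-dimensional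
subspaces of `L^p(μ)` such that for pairwise disjoint measurable sets `(A_n)`, every
`y ∈ E_n` satisfies `‖y − 1_{A_n}·y‖_p ≤ ε_n ‖y‖_p`.  Then for every finitely supported
choice `y_n ∈ E_n`,
`(1−ε)² (∑ ‖y_n‖^p)^{1/p} ≤ ‖∑ y_n‖ ≤ (1+ε) (∑ ‖y_n‖^p)^{1/p}`. -/
theorem almost_disjoint_subspaces_lp_estimate
    {Ω : Type*} [MeasurableSpace Ω] (μ : Measure Ω) {p : ℝ} (hp : 1 ≤ p)
    [Fact (1 ≤ ENNReal.ofReal p)]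
    (eps : ℕ → ℝ) (heps0 : ∀ n, 0 < eps n) (heps1 : ∀ n, eps n < 1)
    (hsummable : Summable (fun n => eps n / (1 - eps n)))
    {ε : ℝ} (hε : ∑' n, eps n / (1 - eps n) = ε) (hε1 : ε < 1)
    (E : ℕ → Submodule ℝ (Lp ℝ (ENNReal.ofReal p) μ))
    (hfd : ∀ n, FiniteDimensional ℝ (E n))
    (A : ℕ → Set Ω) (hmeas : ∀ n, MeasurableSet (A n))
    (hdisj : Pairwise (Function.onFun Disjoint A))
    (hind : ∀ n, ∀ y ∈ E n, ∀ z : Lp ℝ (ENNReal.ofReal p) μ,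
      (z : Ω → ℝ) =ᵐ[μ] (A n).indicator (y : Ω → ℝ) → ‖y - z‖ ≤ eps n * ‖y‖) :
    ∀ (s : Finset ℕ) (y : ℕ → Lp ℝ (ENNReal.ofReal p) μ), (∀ n ∈ s, y n ∈ E n) →
      (1 - ε) ^ 2 * (∑ n ∈ s, ‖y n‖ ^ p) ^ (1 / p) ≤ ‖∑ n ∈ s, y n‖ ∧
      ‖∑ n ∈ s, y n‖ ≤ (1 + ε) * (∑ n ∈ s, ‖y n‖ ^ p) ^ (1 / p) := by
  classical
  intro s y hy
  have hp0 : 0 < p := lt_of_lt_of_le one_pos hp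
  -- basic facts about eps and ε
  have hterm_nonneg : ∀ n, 0 ≤ eps n / (1 - eps n) :=
    fun n => div_nonneg (heps0 n).le (by linarith [heps1 n])
  have hε0 : 0 ≤ ε := hε ▸ tsum_nonneg hterm_nonneg
  have hterm_le : ∀ n, eps n / (1 - eps n) ≤ ε := by
    intro n
    rw [← hε]
    exact Summable.le_tsum hsummable n (fun m _ => hterm_nonneg m)
  have heps_le_term : ∀ n, eps n ≤ eps n / (1 - eps n) := by
    intro n
    rw [le_div_iff₀ (by linarith [heps1 n])]
    nlinarith [heps0 n, heps1 n]
  have hsum_eps_le : ∑ n ∈ s, eps n ≤ ε := by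
    calc ∑ n ∈ s, eps n ≤ ∑ n ∈ s, eps n / (1 - eps n) :=
          Finset.sum_le_sum fun n _ => heps_le_term n
      _ ≤ ∑' n, eps n / (1 - eps n) := Summable.sum_le_tsum s (fun m _ => hterm_nonneg m) hsummable
      _ = ε := hε
  have hsum_term_le : ∑ n ∈ s, eps n / (1 - eps n) ≤ ε := by
    calc ∑ n ∈ s, eps n / (1 - eps n) ≤ ∑' n, eps n / (1 - eps n) :=
          Summable.sum_le_tsum s (fun m _ => hterm_nonneg m) hsummable
      _ = ε := hε
  have heps_le_ε : ∀ n, eps n ≤ ε := fun n => (heps_le_term n).trans (hterm_le n)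
  -- define the truncations z n
  set z : ℕ → Lp ℝ (ENNReal.ofReal p) μ :=
    fun n => ((Lp.memLp (y n)).indicator (hmeas n)).toLp ((A n).indicator (y n : Ω → ℝ))
    with hz_def
  have hz_coe : ∀ n, (z n : Ω → ℝ) =ᵐ[μ] (A n).indicator (y n : Ω → ℝ) :=
    fun n => MemLp.coeFn_toLp _
  have hz_supp : ∀ n, (z n : Ω → ℝ) =ᵐ[μ] (A n).indicator (z n : Ω → ℝ) := by
    intro n
    refine (hz_coe n).trans ?_
    calc (A n).indicator (y n : Ω → ℝ)
        = (A n).indicator ((A n).indicator (y n : Ω → ℝ)) := by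
          rw [Set.indicator_indicator, Set.inter_self]
      _ =ᵐ[μ] (A n).indicator (z n : Ω → ℝ) := by
          filter_upwards [hz_coe n] with ω hω
          by_cases hωA : ω ∈ A n <;> simp [Set.indicator_apply, hωA, hω]
  -- the perturbation bounds
  have hyz : ∀ n ∈ s, ‖y n - z n‖ ≤ eps n * ‖y n‖ :=
    fun n hn => hind n (y n) (hy n hn) (z n) (hz_coe n)
  have hz_le : ∀ n, ‖z n‖ ≤ ‖y n‖ := by
    intro n
    rw [Lp.norm_def, Lp.norm_def, eLpNorm_congr_ae (hz_coe n)]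
    exact ENNReal.toReal_mono (Lp.eLpNorm_ne_top (y n)) (eLpNorm_indicator_le _)
  have hz_ge : ∀ n ∈ s, (1 - eps n) * ‖y n‖ ≤ ‖z n‖ := by
    intro n hn
    have h1 : ‖y n‖ - ‖y n - z n‖ ≤ ‖z n‖ := by
      have := norm_sub_norm_le (y n) (y n - z n)
      simpa using this
    have := hyz n hn
    nlinarith [norm_nonneg (y n)]
  -- norm of y n bounded by norm of z n
  have hy_le_z : ∀ n ∈ s, ‖y n - z n‖ ≤ eps n / (1 - eps n) * ‖z n‖ := by
    intro n hn
    have h1 : 0 < 1 - eps n := by linarith [heps1 n]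
    have h2 := hz_ge n hn
    have h3 := hyz n hn
    rw [div_mul_eq_mul_div, le_div_iff₀ h1]
    nlinarith [heps0 n]
  -- abbreviations
  set S : ℝ := (∑ n ∈ s, ‖y n‖ ^ p) ^ (1 / p) with hS_def
  set Z : ℝ := (∑ n ∈ s, ‖z n‖ ^ p) ^ (1 / p) with hZ_def
  have hsumy_nonneg : 0 ≤ ∑ n ∈ s, ‖y n‖ ^ p :=
    Finset.sum_nonneg fun n _ => Real.rpow_nonneg (norm_nonneg _) p
  have hsumz_nonneg : 0 ≤ ∑ n ∈ s, ‖z n‖ ^ p :=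
    Finset.sum_nonneg fun n _ => Real.rpow_nonneg (norm_nonneg _) p
  have hS_nonneg : 0 ≤ S := Real.rpow_nonneg hsumy_nonneg _
  have hZ_nonneg : 0 ≤ Z := Real.rpow_nonneg hsumz_nonneg _
  -- the key disjointness identity
  have hkey : ‖∑ n ∈ s, z n‖ ^ p = ∑ n ∈ s, ‖z n‖ ^ p :=
    norm_sum_rpow_of_disjoint hp0 A hdisj s z (fun n _ => hz_supp n)
  have hZnorm : ‖∑ n ∈ s, z n‖ = Z := by
    rw [hZ_def, ← hkey, ← Real.rpow_mul (norm_nonneg _), mul_one_div, div_self hp0.ne',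
      Real.rpow_one]
  -- each norm is dominated by the ℓ^p sum
  have hy_le_S : ∀ n ∈ s, ‖y n‖ ≤ S := by
    intro n hn
    have h1 : ‖y n‖ ^ p ≤ ∑ m ∈ s, ‖y m‖ ^ p :=
      Finset.single_le_sum (fun m _ => Real.rpow_nonneg (norm_nonneg _) p) hn
    have h2 : (‖y n‖ ^ p) ^ (1 / p) ≤ S :=
      Real.rpow_le_rpow (Real.rpow_nonneg (norm_nonneg _) p) h1 (one_div_pos.2 hp0).le
    rwa [← Real.rpow_mul (norm_nonneg _), mul_one_div, div_self hp0.ne',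
      Real.rpow_one] at h2
  have hz_le_Z : ∀ n ∈ s, ‖z n‖ ≤ Z := by
    intro n hn
    have h1 : ‖z n‖ ^ p ≤ ∑ m ∈ s, ‖z m‖ ^ p :=
      Finset.single_le_sum (fun m _ => Real.rpow_nonneg (norm_nonneg _) p) hn
    have h2 : (‖z n‖ ^ p) ^ (1 / p) ≤ Z :=
      Real.rpow_le_rpow (Real.rpow_nonneg (norm_nonneg _) p) h1 (one_div_pos.2 hp0).le
    rwa [← Real.rpow_mul (norm_nonneg _), mul_one_div, div_self hp0.ne',
      Real.rpow_one] at h2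
  -- Z ≤ S
  have hZ_le_S : Z ≤ S := by
    refine Real.rpow_le_rpow hsumz_nonneg ?_ (one_div_pos.2 hp0).le
    exact Finset.sum_le_sum fun n _ =>
      Real.rpow_le_rpow (norm_nonneg _) (hz_le n) hp0.le
  -- (1 - ε) S ≤ Z
  have hS_le_Z : (1 - ε) * S ≤ Z := by
    have h1 : ((1 - ε) ^ p * ∑ n ∈ s, ‖y n‖ ^ p) ^ (1 / p) ≤ Z := by
      refine Real.rpow_le_rpow
        (mul_nonneg (Real.rpow_nonneg (by linarith) p) hsumy_nonneg) ?_ (one_div_pos.2 hp0).le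
      rw [Finset.mul_sum]
      refine Finset.sum_le_sum fun n hn => ?_
      rw [← Real.mul_rpow (by linarith) (norm_nonneg _)]
      refine Real.rpow_le_rpow (by nlinarith [norm_nonneg (y n)]) ?_ hp0.le
      calc (1 - ε) * ‖y n‖ ≤ (1 - eps n) * ‖y n‖ := by
            nlinarith [norm_nonneg (y n), heps_le_ε n]
        _ ≤ ‖z n‖ := hz_ge n hn
    rwa [Real.mul_rpow (Real.rpow_nonneg (by linarith) p) hsumy_nonneg, ← Real.rpow_mul (by linarith),
      mul_one_div, div_self hp0.ne', Real.rpow_one] at h1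
  -- difference bound
  have hdiff : ‖∑ n ∈ s, y n - ∑ n ∈ s, z n‖ ≤ ∑ n ∈ s, ‖y n - z n‖ := by
    rw [← Finset.sum_sub_distrib]
    exact norm_sum_le s _
  -- upper bound
  have hupper : ‖∑ n ∈ s, y n‖ ≤ (1 + ε) * S := by
    have h1 : ‖∑ n ∈ s, y n‖ ≤ ‖∑ n ∈ s, z n‖ + ∑ n ∈ s, ‖y n - z n‖ := by
      calc ‖∑ n ∈ s, y n‖ = ‖∑ n ∈ s, z n + (∑ n ∈ s, y n - ∑ n ∈ s, z n)‖ :=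
            congrArg norm (by abel)
        _ ≤ ‖∑ n ∈ s, z n‖ + ‖∑ n ∈ s, y n - ∑ n ∈ s, z n‖ := norm_add_le _ _
        _ ≤ _ := by linarith [hdiff]
    have h2 : ∑ n ∈ s, ‖y n - z n‖ ≤ ε * S := by
      calc ∑ n ∈ s, ‖y n - z n‖ ≤ ∑ n ∈ s, eps n * S := by
            refine Finset.sum_le_sum fun n hn => ?_
            calc ‖y n - z n‖ ≤ eps n * ‖y n‖ := hyz n hn
              _ ≤ eps n * S := by
                  have := hy_le_S n hn
                  nlinarith [heps0 n]
        _ = (∑ n ∈ s, eps n) * S := by rw [Finset.sum_mul]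
        _ ≤ ε * S := by nlinarith [hsum_eps_le]
    calc ‖∑ n ∈ s, y n‖ ≤ ‖∑ n ∈ s, z n‖ + ∑ n ∈ s, ‖y n - z n‖ := h1
      _ ≤ Z + ε * S := by rw [hZnorm]; linarith
      _ ≤ (1 + ε) * S := by nlinarith [hZ_le_S]
  -- lower bound
  have hlower : (1 - ε) ^ 2 * S ≤ ‖∑ n ∈ s, y n‖ := by
    have h1 : ‖∑ n ∈ s, z n‖ - ∑ n ∈ s, ‖y n - z n‖ ≤ ‖∑ n ∈ s, y n‖ := by
      have h2 : ‖∑ n ∈ s, z n‖ - ‖∑ n ∈ s, y n - ∑ n ∈ s, z n‖ ≤ ‖∑ n ∈ s, y n‖ := by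
        have := norm_sub_norm_le (∑ n ∈ s, z n) (∑ n ∈ s, z n - ∑ n ∈ s, y n)
        simp only [sub_sub_cancel] at this
        calc ‖∑ n ∈ s, z n‖ - ‖∑ n ∈ s, y n - ∑ n ∈ s, z n‖
            = ‖∑ n ∈ s, z n‖ - ‖∑ n ∈ s, z n - ∑ n ∈ s, y n‖ := by rw [norm_sub_rev]
          _ ≤ ‖∑ n ∈ s, y n‖ := this
      linarith [hdiff]
    have h3 : ∑ n ∈ s, ‖y n - z n‖ ≤ ε * Z := by
      calc ∑ n ∈ s, ‖y n - z n‖ ≤ ∑ n ∈ s, (eps n / (1 - eps n)) * Z := by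
            refine Finset.sum_le_sum fun n hn => ?_
            calc ‖y n - z n‖ ≤ eps n / (1 - eps n) * ‖z n‖ := hy_le_z n hn
              _ ≤ eps n / (1 - eps n) * Z := by
                  have := hz_le_Z n hn
                  nlinarith [hterm_nonneg n]
        _ = (∑ n ∈ s, eps n / (1 - eps n)) * Z := by rw [Finset.sum_mul]
        _ ≤ ε * Z := by nlinarith [hsum_term_le]
    calc (1 - ε) ^ 2 * S = (1 - ε) * ((1 - ε) * S) := by ring
      _ ≤ (1 - ε) * Z := by nlinarith [hS_le_Z]
      _ = Z - ε * Z := by ring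
      _ ≤ ‖∑ n ∈ s, z n‖ - ∑ n ∈ s, ‖y n - z n‖ := by rw [hZnorm]; linarith
      _ ≤ ‖∑ n ∈ s, y n‖ := h1
  exact ⟨hlower, hupper⟩
end
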